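/- arXiv:1905.08582 — 5 statements merged into one kernel-verified Lean document; each statement's English description precedes it below -/
import Mathlib

section
/- Let λ > 0 and let W and Y be independent real-valued random variables on a common probability space such that W has distribution Exp(λ), Y ≥ 0 almost surely, and the cumulative distribution function G(s) = P(Y ≤ s) is continuous on ℝ. Then the function F(s) = P(W + Y ≤ s) is differentiable at every s ∈ ℝ and satisfies F(s) + λ^{−1}·F′(s) = G(s) for all s ∈ ℝ. -/
open MeasureTheory ProbabilityTheory Set Filter Topology

private lemma my_exp_lip {u v : ℝ} (hu : u ≤ 0) (hv : v ≤ 0) :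
    |Real.exp u - Real.exp v| ≤ |u - v| := by
  wlog h : v ≤ u generalizing u v
  · rw [abs_sub_comm, abs_sub_comm u v]
    exact this hv hu (le_of_not_ge h)
  have h1 := Real.add_one_le_exp (v - u)
  have h2 : Real.exp u * Real.exp (v - u) = Real.exp v := by
    rw [← Real.exp_add]; ring_nf
  have h3 : Real.exp u ≤ 1 := Real.exp_le_one_iff.mpr hu
  have h4 : Real.exp v ≤ Real.exp u := Real.exp_le_exp.mpr h
  rw [abs_of_nonneg (by linarith), abs_of_nonneg (by linarith)]
  nlinarith [Real.exp_pos u]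

private lemma my_phi_lip {lam : ℝ} (hlam : 0 < lam) (a b : ℝ) :
    |(1 - Real.exp (-(lam * max a 0))) - (1 - Real.exp (-(lam * max b 0)))| ≤ lam * |a - b| := by
  have hu : -(lam * max a 0) ≤ 0 := by
    have : 0 ≤ max a 0 := le_max_right _ _
    nlinarith
  have hv : -(lam * max b 0) ≤ 0 := by
    have : 0 ≤ max b 0 := le_max_right _ _
    nlinarith
  have h1 := my_exp_lip hu hv
  have h2 : |(-(lam * max a 0)) - (-(lam * max b 0))| = lam * |max a 0 - max b 0| := by
    have he : (-(lam * max a 0)) - (-(lam * max b 0)) = lam * (max b 0 - max a 0) := by ring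
    rw [he, abs_mul, abs_of_pos hlam, abs_sub_comm]
  have h3 : |max a 0 - max b 0| ≤ |a - b| := abs_max_sub_max_le_abs a b 0
  have h0 : (1 - Real.exp (-(lam * max a 0))) - (1 - Real.exp (-(lam * max b 0)))
      = -(Real.exp (-(lam * max a 0)) - Real.exp (-(lam * max b 0))) := by ring
  rw [h0, abs_neg]
  calc |Real.exp (-(lam * max a 0)) - Real.exp (-(lam * max b 0))|
      ≤ |(-(lam * max a 0)) - (-(lam * max b 0))| := h1
    _ = lam * |max a 0 - max b 0| := h2
    _ ≤ lam * |a - b| := mul_le_mul_of_nonneg_left h3 hlam.le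

/-- If W ~ Exp(λ) and Y ≥ 0 a.s. are independent, and the CDF
G(s) = P(Y ≤ s) is continuous, then F(s) = P(W + Y ≤ s) is differentiable everywhere and
F(s) + λ⁻¹·F′(s) = G(s) for all s. -/
theorem stmt2 {Ω : Type*} [MeasureSpace Ω] [IsProbabilityMeasure (ℙ : Measure Ω)]
    (lam : ℝ) (hlam : 0 < lam) (W Y : Ω → ℝ) (hW : Measurable W) (hY : Measurable Y)
    (hInd : IndepFun W Y ℙ)
    (hWlaw : Measure.map W ℙ = expMeasure lam)
    (hYpos : ∀ᵐ ω ∂ℙ, 0 ≤ Y ω)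
    (G : ℝ → ℝ) (hG : ∀ s, G s = (ℙ {ω | Y ω ≤ s}).toReal)
    (hGcont : Continuous G)
    (F : ℝ → ℝ) (hF : ∀ s, F s = (ℙ {ω | W ω + Y ω ≤ s}).toReal) :
    ∀ s : ℝ, DifferentiableAt ℝ F s ∧ F s + lam⁻¹ * deriv F s = G s := by
  intro s
  set μ : Measure ℝ := Measure.map Y ℙ with hμdef
  haveI hμprob : IsProbabilityMeasure μ := Measure.isProbabilityMeasure_map hY.aemeasurable
  set φ : ℝ → ℝ := fun t => 1 - Real.exp (-(lam * max t 0)) with hφdef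
  set ψ : ℝ → ℝ := fun t => if 0 < t then lam * Real.exp (-(lam * t)) else 0 with hψdef
  have hφcont : Continuous φ := by
    apply continuous_const.sub
    exact ((continuous_const.mul (continuous_id.max continuous_const)).neg).rexp
  have hφ01 : ∀ t, 0 ≤ φ t ∧ φ t ≤ 1 := by
    intro t
    have hle : -(lam * max t 0) ≤ 0 := by
      have : 0 ≤ max t 0 := le_max_right _ _
      nlinarith
    have h1 : Real.exp (-(lam * max t 0)) ≤ 1 := Real.exp_le_one_iff.mpr hle
    have h2 : 0 < Real.exp (-(lam * max t 0)) := Real.exp_pos _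
    constructor <;> simp [hφdef] <;> linarith
  -- CDF of the exponential measure
  have hExpIic : ∀ t : ℝ, expMeasure lam (Iic t) = ENNReal.ofReal (φ t) := by
    intro t
    have h1 : expMeasure lam (Iic t) = ∫⁻ y in Iic t, exponentialPDF lam y := by
      rw [expMeasure, gammaMeasure, withDensity_apply _ measurableSet_Iic]
      rfl
    rw [h1, lintegral_exponentialPDF_eq_antiDeriv hlam t]
    congr 1
    by_cases h : 0 ≤ t
    · rw [if_pos h]; simp [hφdef, max_eq_left h]
    · rw [if_neg h]; simp [hφdef, max_eq_right (le_of_not_ge h)]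
  -- representation of F
  have hmap : Measure.map (fun ω => (Y ω, W ω)) ℙ = μ.prod (Measure.map W ℙ) :=
    (indepFun_iff_map_prod_eq_prod_map_map hY.aemeasurable hW.aemeasurable).mp hInd.symm
  have hlint : ∀ x : ℝ, ℙ {ω | W ω + Y ω ≤ x} = ∫⁻ y, ENNReal.ofReal (φ (x - y)) ∂μ := by
    intro x
    have hset : {ω | W ω + Y ω ≤ x} = (fun ω => (Y ω, W ω)) ⁻¹' {p : ℝ × ℝ | p.2 + p.1 ≤ x} := by
      ext ω; simp [Set.mem_setOf_eq]
    have hms : MeasurableSet {p : ℝ × ℝ | p.2 + p.1 ≤ x} :=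
      measurableSet_le (measurable_snd.add measurable_fst) measurable_const
    rw [hset, ← Measure.map_apply (hY.prodMk hW) hms, hmap, Measure.prod_apply hms]
    apply lintegral_congr
    intro y
    have hpre : (Prod.mk y ⁻¹' {p : ℝ × ℝ | p.2 + p.1 ≤ x}) = Iic (x - y) := by
      ext w
      simp only [Set.mem_preimage, Set.mem_setOf_eq, Set.mem_Iic]
      constructor <;> intro <;> linarith
    rw [hpre, hWlaw, hExpIic]
  have hφsm : ∀ x : ℝ, AEStronglyMeasurable (fun y => φ (x - y)) μ :=
    fun x => ((hφcont.comp (continuous_const.sub continuous_id)).aestronglyMeasurable)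
  have hFrep : ∀ x : ℝ, F x = ∫ y, φ (x - y) ∂μ := by
    intro x
    have h := integral_eq_lintegral_of_nonneg_ae (μ := μ) (f := fun y => φ (x - y))
      (ae_of_all _ fun y => (hφ01 _).1) (hφsm x)
    rw [hF x, hlint x]
    exact h.symm
  -- representation of G
  have hGμ : ∀ x : ℝ, G x = (μ (Iic x)).toReal := by
    intro x
    rw [hG x]
    congr 1
    rw [hμdef, Measure.map_apply hY measurableSet_Iic]
    rfl
  -- no atoms
  have hatom : ∀ a : ℝ, μ {a} = 0 := by
    intro a
    have hmono : Monotone (fun n : ℕ => Iic (a - 1 / (n + 1 : ℝ))) := by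
      intro m n hmn
      apply Iic_subset_Iic.mpr
      have h1 : (m : ℝ) + 1 ≤ (n : ℝ) + 1 := by exact_mod_cast Nat.succ_le_succ hmn
      have h2 : (0:ℝ) < (m : ℝ) + 1 := by positivity
      have := one_div_le_one_div_of_le h2 h1
      linarith
    have hUnion : (⋃ n : ℕ, Iic (a - 1 / (n + 1 : ℝ))) = Iio a := by
      ext x
      simp only [Set.mem_iUnion, Set.mem_Iic, Set.mem_Iio]
      constructor
      · rintro ⟨n, hn⟩
        have : (0:ℝ) < 1 / (n + 1 : ℝ) := by positivity
        linarith
      · intro hx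
        obtain ⟨n, hn⟩ := exists_nat_one_div_lt (by linarith : (0:ℝ) < a - x)
        exact ⟨n, by linarith⟩
    have htend : Tendsto (fun n : ℕ => μ (Iic (a - 1 / (n + 1 : ℝ)))) atTop (𝓝 (μ (Iio a))) := by
      have := tendsto_measure_iUnion_atTop (μ := μ) hmono
      rwa [hUnion] at this
    have htendR : Tendsto (fun n : ℕ => (μ (Iic (a - 1 / (n + 1 : ℝ)))).toReal) atTop
        (𝓝 (μ (Iio a)).toReal) :=
      (ENNReal.tendsto_toReal (measure_ne_top μ _)).comp htend
    have harg : Tendsto (fun n : ℕ => a - 1 / (n + 1 : ℝ)) atTop (𝓝 a) := by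
      have h0 : Tendsto (fun n : ℕ => 1 / (n + 1 : ℝ)) atTop (𝓝 0) :=
        tendsto_one_div_add_atTop_nhds_zero_nat
      have := tendsto_const_nhds (x := a) (f := atTop (α := ℕ)).sub h0
      simpa using this
    have htendG : Tendsto (fun n : ℕ => G (a - 1 / (n + 1 : ℝ))) atTop (𝓝 (G a)) :=
      (hGcont.continuousAt.tendsto).comp harg
    have heq : (μ (Iio a)).toReal = G a := by
      apply tendsto_nhds_unique htendR
      convert htendG using 2 with n
      rw [hGμ]
    have heq2 : μ (Iic a) = μ (Iio a) := by
      apply (ENNReal.toReal_eq_toReal_iff' (measure_ne_top μ _) (measure_ne_top μ _)).mp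
      rw [heq, hGμ a]
    have hunion : μ (Iio a) + μ {a} = μ (Iic a) := by
      rw [← measure_union (by simp) (measurableSet_singleton a), Set.Iio_union_right]
    rw [heq2] at hunion
    have h0 : μ (Iio a) + μ {a} = μ (Iio a) + 0 := by rw [add_zero]; exact hunion
    exact (ENNReal.add_right_inj (measure_ne_top μ _)).mp h0
  have hae : ∀ᵐ y ∂μ, y ≠ s := by
    rw [ae_iff]
    convert hatom s using 2
    ext y; simp
  -- derivative of the integrand
  have h_diff : ∀ᵐ y ∂μ, HasDerivAt (fun x => φ (x - y)) (ψ (s - y)) s := by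
    filter_upwards [hae] with y hy
    rcases hy.lt_or_gt with h | h
    · have h0 : 0 < s - y := by linarith
      have h1 : HasDerivAt (fun a => -Real.exp (-(lam * a)))
          (lam * Real.exp (-(lam * (s - y)))) (s - y) := hasDerivAt_neg_exp_mul_exp
      have h2 : HasDerivAt (fun x : ℝ => x - y) 1 s := (hasDerivAt_id s).sub_const y
      have h3 := h1.comp s h2
      have h5 : HasDerivAt (fun x : ℝ => 1 - Real.exp (-(lam * (x - y))))
          (lam * Real.exp (-(lam * (s - y)))) s := by
        have h4 := h3.const_add 1
        simpa [Function.comp, sub_eq_add_neg] using h4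
      have h6 : ψ (s - y) = lam * Real.exp (-(lam * (s - y))) := if_pos h0
      rw [h6]
      refine h5.congr_of_eventuallyEq ?_
      have hev : ∀ᶠ x in 𝓝 s, y < x := eventually_gt_nhds h
      filter_upwards [hev] with x hx
      simp [hφdef, max_eq_left (by linarith : (0:ℝ) ≤ x - y)]
    · have h6 : ψ (s - y) = 0 := if_neg (by linarith)
      rw [h6]
      refine (hasDerivAt_const s ((0:ℝ))).congr_of_eventuallyEq ?_
      have hev : ∀ᶠ x in 𝓝 s, x < y := eventually_lt_nhds h
      filter_upwards [hev] with x hx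
      have : max (x - y) 0 = 0 := max_eq_right (by linarith)
      simp [hφdef, this]
  -- Lipschitz bound
  have hφlipOn : ∀ᵐ y ∂μ, LipschitzOnWith (Real.nnabs lam)
      (fun x => φ (x - y)) (Metric.ball s 1) := by
    refine ae_of_all _ fun y => ?_
    have hlip : LipschitzWith (Real.nnabs lam) (fun x => φ (x - y)) := by
      apply LipschitzWith.of_dist_le_mul
      intro a b
      have key := my_phi_lip hlam (a - y) (b - y)
      have habs : |a - y - (b - y)| = |a - b| := by congr 1; ring
      rw [habs] at key
      have hc : (Real.nnabs lam : ℝ) = lam := by rw [Real.coe_nnabs, abs_of_pos hlam]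
      rw [Real.dist_eq, Real.dist_eq, hc]
      exact key
    exact hlip.lipschitzOnWith
  -- measurability and integrability
  have hψmeas : Measurable ψ := by
    apply Measurable.ite (measurableSet_lt measurable_const measurable_id)
    · exact (measurable_const.mul ((measurable_const.mul measurable_id).neg.exp))
    · exact measurable_const
  have hF'meas : AEStronglyMeasurable (fun y => ψ (s - y)) μ :=
    (hψmeas.comp (measurable_const.sub measurable_id)).aestronglyMeasurable
  have hFint : Integrable (fun y => φ (s - y)) μ := by
    refine Integrable.mono' (integrable_const 1) (hφsm s) (ae_of_all _ fun y => ?_)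
    rw [Real.norm_eq_abs, abs_of_nonneg (hφ01 _).1]
    exact (hφ01 _).2
  obtain ⟨hψint, key⟩ := hasDerivAt_integral_of_dominated_loc_of_lip
    (F := fun x y => φ (x - y)) (F' := fun y => ψ (s - y)) (x₀ := s)
    (bound := fun _ => lam) (μ := μ) (Metric.ball_mem_nhds s one_pos)
    (Eventually.of_forall fun x => hφsm x) hFint hF'meas hφlipOn (integrable_const lam) h_diff
  have hFeq : F = fun x => ∫ y, φ (x - y) ∂μ := funext hFrep
  constructor
  · rw [hFeq]; exact key.differentiableAt
  · have hderiv : deriv F s = ∫ y, ψ (s - y) ∂μ := by rw [hFeq]; exact key.deriv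
    have hGrep : G s = ∫ y, Set.indicator (Iic s) (fun _ => (1:ℝ)) y ∂μ := by
      rw [hGμ s, integral_indicator_const (1:ℝ) measurableSet_Iic, smul_eq_mul, mul_one, measureReal_def]
    rw [hderiv, hFrep s, hGrep, ← integral_const_mul,
      ← integral_add hFint (hψint.const_mul lam⁻¹)]
    refine integral_congr_ae ?_
    filter_upwards [hae] with y hy
    rcases hy.lt_or_gt with h | h
    · have h0 : 0 < s - y := by linarith
      have hmem : y ∈ Iic s := mem_Iic.mpr h.le
      rw [Set.indicator_of_mem hmem]
      simp only [hφdef, hψdef, if_pos h0, max_eq_left h0.le]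
      field_simp
      ring
    · have hnmem : y ∉ Iic s := by simp [mem_Iic]; linarith
      rw [Set.indicator_of_notMem hnmem]
      have h1 : max (s - y) 0 = 0 := max_eq_right (by linarith)
      simp [hφdef, hψdef, if_neg (by linarith : ¬ 0 < s - y), h1]
end

section
/- Fix integers N ≥ 1 and 0 ≤ n ≤ N−1, reals α, β ∈ (−1/2,1/2) with β > 0, α + β > 0 and α ≠ β, and reals x, y. Let G(z,w) = [Φ(x,z)/Φ(y,w)]·[(1/2−z)(1/2+w)]^n·[(z+β)(w−β)]/[(z−β)(w+β)]·[(z+α)(w−α)(z+w)]/[4zw(z−w)]. Define K₁₁(x,y) = −( ∮_{Γ_{1/2}}dz ∮_{Γ_{−1/2}}dw + ∮_{Γ_{1/2}}dz ∮_{Γ_{−β}}dw + ∮_{Γ_{β}}dz ∮_{Γ_{−1/2}}dw ) G(z,w), where in each double integral the z-contour and the w-contour are disjoint, and K̄₁₁(x,y) = −∮_{Γ_{1/2}}dz ∮_{Γ_{−1/2}}dw G(z,w). Then K₁₁(x,y) = K̄₁₁(x,y) + (α+β)·( g₁(x)·f₊^β(y) − f₊^β(x)·g₁(y) ). -/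
open Complex Metric MeasureTheory Set

/-- Contour integral over the positively oriented circle of center `c`, radius `r`,
normalized by 1/(2πi). -/
noncomputable def cInt (c : ℂ) (r : ℝ) (f : ℂ → ℂ) : ℂ :=
  (2 * Real.pi * Complex.I)⁻¹ * ∮ z in C(c, r), f z

/-- `okCircle c r avoid` : positive radius, circle not enclosing nor touching any point of
`avoid`. -/
def okCircle (c r : ℝ) (avoid : List ℝ) : Prop := 0 < r ∧ ∀ p ∈ avoid, r < |c - p|

/-- Two circles with real centers are disjoint. -/
def disjC (c₁ r₁ c₂ r₂ : ℝ) : Prop := r₁ + r₂ < |c₁ - c₂|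

/-- Φ(x,z) = e^{−xz}·((1/2+z)/(1/2−z))^{N−1}. -/
noncomputable def PhiF (N : ℕ) (x : ℝ) (z : ℂ) : ℂ :=
  Complex.exp (-(x : ℂ) * z) * (((1 / 2 : ℂ) + z) / ((1 / 2 : ℂ) - z)) ^ (N - 1)

/-- The integrand G(z,w) of the (11) kernel entry. -/
noncomputable def G11 (N n : ℕ) (α β x y : ℝ) (z w : ℂ) : ℂ :=
  PhiF N x z / PhiF N y w * (((1 / 2 : ℂ) - z) * ((1 / 2 : ℂ) + w)) ^ n *
    ((z + (β : ℂ)) * (w - (β : ℂ))) / ((z - (β : ℂ)) * (w + (β : ℂ))) *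
    ((z + (α : ℂ)) * (w - (α : ℂ)) * (z + w)) / (4 * z * w * (z - w))

/-- g₁(x) over a small circle around 1/2. -/
noncomputable def g1F (N n : ℕ) (α x : ℝ) (r : ℝ) : ℂ :=
  cInt (1 / 2) r (fun z => PhiF N x z * ((1 / 2 : ℂ) - z) ^ n * (z + (α : ℂ)) / (2 * z))

/-- f₊^β(x) = Φ(x,β)·(1/2−β)^n. -/
noncomputable def fplus (N n : ℕ) (β x : ℝ) : ℂ :=
  PhiF N x β * ((1 / 2 : ℂ) - (β : ℂ)) ^ n

/-! ### Auxiliary definitions -/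

/-- The integrand of `g1F`. -/
noncomputable def gI (N n : ℕ) (α x : ℝ) (z : ℂ) : ℂ :=
  PhiF N x z * ((1 / 2 : ℂ) - z) ^ n * (z + (α : ℂ)) / (2 * z)

/-- The function appearing after evaluating the `z`-residue at `β`. -/
noncomputable def rhoF (N n : ℕ) (α y : ℝ) (w : ℂ) : ℂ :=
  ((1 / 2 : ℂ) + w) ^ n * (w - (α : ℂ)) / (2 * w * PhiF N y w)

lemma g1F_eq (N n : ℕ) (α x : ℝ) (r : ℝ) : g1F N n α x r = cInt (1 / 2) r (gI N n α x) := rfl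

/-! ### Generic helper lemmas -/

lemma ne_far {z w c₁ c₂ : ℂ} {R₁ R₂ : ℝ} (h₁ : dist z c₁ ≤ R₁) (h₂ : dist w c₂ ≤ R₂)
    (h : R₁ + R₂ < dist c₁ c₂) : z ≠ w := by
  rintro rfl
  have ht := dist_triangle c₁ z c₂
  rw [dist_comm c₁ z] at ht
  linarith

lemma ne_pt {z c p : ℂ} {R : ℝ} (h₁ : dist z c ≤ R) (h : R < dist c p) : z ≠ p :=
  ne_far (c₂ := p) (R₂ := 0) h₁ (by simp) (by rwa [add_zero])

lemma cdist (p q : ℝ) : dist ((p : ℂ)) ((q : ℂ)) = |p - q| := by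
  rw [Complex.dist_eq, ← Complex.ofReal_sub, Complex.norm_real, Real.norm_eq_abs]

/-! ### Basic `cInt` lemmas -/

lemma cInt_congr {c : ℂ} {r : ℝ} (hr : 0 ≤ r) {f g : ℂ → ℂ}
    (h : Set.EqOn f g (sphere c r)) : cInt c r f = cInt c r g := by
  unfold cInt; rw [circleIntegral.integral_congr hr h]

lemma cInt_const_mul (a : ℂ) (c : ℂ) (r : ℝ) (f : ℂ → ℂ) :
    cInt c r (fun z => a * f z) = a * cInt c r f := by
  unfold cInt; rw [circleIntegral.integral_const_mul]; ring

lemma cInt_cauchy {R : ℝ} (hR : 0 < R) {c : ℂ} {f : ℂ → ℂ}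
    (hd : ∀ x ∈ closedBall c R, DifferentiableAt ℂ f x) :
    cInt c R (fun z => (z - c)⁻¹ * f z) = f c := by
  have hc : ContinuousOn f (closedBall c R) := fun x hx =>
    (hd x hx).continuousAt.continuousWithinAt
  have hd' : ∀ x ∈ ball c R \ (∅ : Set ℂ), DifferentiableAt ℂ f x := fun x hx =>
    hd x (ball_subset_closedBall hx.1)
  have := Complex.two_pi_I_inv_smul_circleIntegral_sub_inv_smul_of_differentiable_on_off_countable
    Set.countable_empty (Metric.mem_ball_self hR) hc hd'
  simpa [cInt, smul_eq_mul] using this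

lemma cInt_deform {c : ℂ} {r R : ℝ} (h0r : 0 < r) (h0R : 0 < R) {f : ℂ → ℂ}
    (hd : ∀ z ∈ closedBall c (max r R) \ ball c (min r R), DifferentiableAt ℂ f z) :
    cInt c r f = cInt c R f := by
  unfold cInt
  rcases le_total r R with h | h
  · rw [min_eq_left h, max_eq_right h] at hd
    congr 1
    refine (circleIntegral_eq_of_differentiable_on_annulus_off_countable h0r h
      Set.countable_empty (fun z hz => (hd z hz).continuousAt.continuousWithinAt)
      (fun z hz => hd z ⟨ball_subset_closedBall hz.1.1, fun hb => hz.1.2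
        (ball_subset_closedBall hb)⟩)).symm
  · rw [min_eq_right h, max_eq_left h] at hd
    congr 1
    exact circleIntegral_eq_of_differentiable_on_annulus_off_countable h0R h
      Set.countable_empty (fun z hz => (hd z hz).continuousAt.continuousWithinAt)
      (fun z hz => hd z ⟨ball_subset_closedBall hz.1.1, fun hb => hz.1.2
        (ball_subset_closedBall hb)⟩)

/-! ### Reflection of circle integrals -/

lemma circleMap_zero_add_pi (r : ℝ) (θ : ℝ) :
    circleMap 0 r (θ + Real.pi) = -circleMap 0 r θ := by
  simp only [circleMap, zero_add]
  rw [Complex.ofReal_add, add_mul, Complex.exp_add]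
  have : Complex.exp (↑Real.pi * I) = -1 := by simp
  rw [this]; ring

lemma circleMap_neg_center (c : ℂ) (r : ℝ) (θ : ℝ) :
    circleMap (-c) r θ = -circleMap c r (θ + Real.pi) := by
  simp only [circleMap]
  rw [Complex.ofReal_add, add_mul, Complex.exp_add]
  have : Complex.exp (↑Real.pi * I) = -1 := by simp
  rw [this]; ring

/-- Reflection: integral over circle around `-c` equals minus integral of reflected function. -/
lemma circleIntegral_reflect (c : ℂ) (r : ℝ) (f : ℂ → ℂ) :
    (∮ w in C(-c, r), f w) = -∮ z in C(c, r), f (-z) := by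
  simp only [circleIntegral, deriv_circleMap, smul_eq_mul]
  set g : ℝ → ℂ := fun θ => circleMap 0 r θ * I * f (-circleMap c r θ) with hg
  have hper : Function.Periodic g (2 * Real.pi) := by
    intro θ; simp only [hg, periodic_circleMap c r θ, periodic_circleMap 0 r θ]
  have h1 : (∫ θ in (0:ℝ)..2 * Real.pi, circleMap 0 r θ * I * f (circleMap (-c) r θ))
      = ∫ θ in (0:ℝ)..2 * Real.pi, -g (θ + Real.pi) := by
    congr 1; funext θ
    simp only [hg, circleMap_zero_add_pi, circleMap_neg_center]
    ring
  rw [h1, intervalIntegral.integral_neg]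
  congr 1
  have h2 : (∫ θ in (0:ℝ)..2 * Real.pi, g (θ + Real.pi))
      = ∫ θ in (0 + Real.pi : ℝ)..(2 * Real.pi + Real.pi), g θ :=
    intervalIntegral.integral_comp_add_right _ _
  rw [h2]
  have := hper.intervalIntegral_add_eq (0 + Real.pi) 0
  rw [zero_add] at this ⊢
  rw [show 2 * Real.pi + Real.pi = Real.pi + 2 * Real.pi by ring]
  simpa using this

lemma cInt_reflect (c : ℂ) (r : ℝ) (f : ℂ → ℂ) :
    cInt (-c) r f = -cInt c r (fun z => f (-z)) := by
  unfold cInt; rw [circleIntegral_reflect]; ring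

/-! ### Fubini for double circle integrals -/

lemma circleIntegral_swap {c₁ c₂ : ℂ} {r₁ r₂ : ℝ} (f : ℂ → ℂ → ℂ)
    (hf : ContinuousOn (fun p : ℂ × ℂ => f p.1 p.2) (sphere c₁ |r₁| ×ˢ sphere c₂ |r₂|)) :
    (∮ z in C(c₁, r₁), ∮ w in C(c₂, r₂), f z w)
      = ∮ w in C(c₂, r₂), ∮ z in C(c₁, r₁), f z w := by
  have hmap : Continuous (fun p : ℝ × ℝ => (circleMap c₁ r₁ p.1, circleMap c₂ r₂ p.2)) :=
    ((continuous_circleMap _ _).comp continuous_fst).prodMk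
      ((continuous_circleMap _ _).comp continuous_snd)
  have hfc : Continuous (fun p : ℝ × ℝ => f (circleMap c₁ r₁ p.1) (circleMap c₂ r₂ p.2)) :=
    hf.comp_continuous hmap fun p => ⟨circleMap_mem_sphere' _ _ _, circleMap_mem_sphere' _ _ _⟩
  have hcont : Continuous (fun p : ℝ × ℝ =>
      deriv (circleMap c₁ r₁) p.1 * (deriv (circleMap c₂ r₂) p.2
        * f (circleMap c₁ r₁ p.1) (circleMap c₂ r₂ p.2))) := by
    simp only [deriv_circleMap]
    exact (((continuous_circleMap 0 r₁).comp continuous_fst).mul continuous_const).mul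
      ((((continuous_circleMap 0 r₂).comp continuous_snd).mul continuous_const).mul hfc)
  set F : ℝ → ℝ → ℂ := fun θ φ => deriv (circleMap c₁ r₁) θ * (deriv (circleMap c₂ r₂) φ
      * f (circleMap c₁ r₁ θ) (circleMap c₂ r₂ φ)) with hF
  have h2π : (0:ℝ) ≤ 2 * Real.pi := by positivity
  have hInt : Integrable (Function.uncurry F)
      ((volume.restrict (Ioc (0:ℝ) (2*Real.pi))).prod
        (volume.restrict (Ioc (0:ℝ) (2*Real.pi)))) := by
    rw [Measure.prod_restrict]
    have h' : IntegrableOn (Function.uncurry F)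
        (Icc (0:ℝ) (2*Real.pi) ×ˢ Icc (0:ℝ) (2*Real.pi)) (volume.prod volume) := by
      have : Function.uncurry F = fun p : ℝ × ℝ =>
          deriv (circleMap c₁ r₁) p.1 * (deriv (circleMap c₂ r₂) p.2
            * f (circleMap c₁ r₁ p.1) (circleMap c₂ r₂ p.2)) := rfl
      rw [this]
      exact hcont.continuousOn.integrableOn_compact (isCompact_Icc.prod isCompact_Icc)
    exact h'.mono_set (Set.prod_mono Ioc_subset_Icc_self Ioc_subset_Icc_self)
  have key : (∫ θ in (0:ℝ)..2*Real.pi, ∫ φ in (0:ℝ)..2*Real.pi, F θ φ)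
      = ∫ φ in (0:ℝ)..2*Real.pi, ∫ θ in (0:ℝ)..2*Real.pi, F θ φ := by
    rw [intervalIntegral.integral_of_le h2π, intervalIntegral.integral_of_le h2π]
    simp_rw [intervalIntegral.integral_of_le h2π]
    exact MeasureTheory.integral_integral_swap hInt
  calc (∮ z in C(c₁, r₁), ∮ w in C(c₂, r₂), f z w)
      = ∫ θ in (0:ℝ)..2*Real.pi, ∫ φ in (0:ℝ)..2*Real.pi, F θ φ := by
        simp only [circleIntegral, smul_eq_mul, hF]
        congr 1; funext θ
        rw [← intervalIntegral.integral_const_mul]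
    _ = ∫ φ in (0:ℝ)..2*Real.pi, ∫ θ in (0:ℝ)..2*Real.pi, F θ φ := key
    _ = ∮ w in C(c₂, r₂), ∮ z in C(c₁, r₁), f z w := by
        simp only [circleIntegral, smul_eq_mul, hF]
        congr 1; funext φ
        rw [← intervalIntegral.integral_const_mul]
        congr 1; funext θ; ring

lemma cInt_swap {c₁ c₂ : ℂ} {r₁ r₂ : ℝ} (h₁ : 0 ≤ r₁) (h₂ : 0 ≤ r₂) (f : ℂ → ℂ → ℂ)
    (hf : ContinuousOn (fun p : ℂ × ℂ => f p.1 p.2) (sphere c₁ r₁ ×ˢ sphere c₂ r₂)) :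
    cInt c₁ r₁ (fun z => cInt c₂ r₂ (f z)) = cInt c₂ r₂ (fun w => cInt c₁ r₁ (fun z => f z w)) := by
  have hf' : ContinuousOn (fun p : ℂ × ℂ => f p.1 p.2) (sphere c₁ |r₁| ×ˢ sphere c₂ |r₂|) := by
    rwa [_root_.abs_of_nonneg h₁, _root_.abs_of_nonneg h₂]
  unfold cInt
  rw [circleIntegral.integral_const_mul, circleIntegral.integral_const_mul,
    circleIntegral_swap f hf']

/-! ### Properties of `PhiF` -/

lemma phi_mul (N : ℕ) (x : ℝ) {z : ℂ} (h1 : (1/2 : ℂ) + z ≠ 0) (h2 : (1/2 : ℂ) - z ≠ 0) :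
    PhiF N x z * PhiF N x (-z) = 1 := by
  unfold PhiF
  rw [mul_mul_mul_comm, ← Complex.exp_add, ← mul_pow]
  have e1 : -(x:ℂ) * z + -(x:ℂ) * (-z) = 0 := by ring
  rw [e1, Complex.exp_zero, one_mul]
  have e2 : ((1/2 : ℂ) + z) / ((1/2 : ℂ) - z) * (((1/2:ℂ) + -z) / ((1/2:ℂ) - -z)) = 1 := by
    rw [show (1/2:ℂ) + -z = 1/2 - z by ring, show (1/2:ℂ) - -z = 1/2 + z by ring,
      div_mul_div_comm, mul_comm ((1/2:ℂ) + z), div_self (mul_ne_zero h2 h1)]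
  rw [e2, one_pow]

lemma phi_ne (N : ℕ) (x : ℝ) {z : ℂ} (h1 : (1/2 : ℂ) + z ≠ 0) (h2 : (1/2 : ℂ) - z ≠ 0) :
    PhiF N x z ≠ 0 :=
  mul_ne_zero (Complex.exp_ne_zero _) (pow_ne_zero _ (div_ne_zero h1 h2))

/-! ### Differentiability of the integrands -/

lemma gdiffW (N n : ℕ) (α β x y : ℝ) {z w : ℂ} (h1 : PhiF N y w ≠ 0)
    (h2 : (1/2 : ℂ) - w ≠ 0) (h3 : (z - (β:ℂ)) * (w + (β:ℂ)) ≠ 0)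
    (h4 : 4 * z * w * (z - w) ≠ 0) :
    DifferentiableAt ℂ (fun w => G11 N n α β x y z w) w := by
  unfold PhiF at h1
  unfold G11 PhiF
  fun_prop (disch := assumption)

lemma gdiffZ (N n : ℕ) (α β x y : ℝ) {z w : ℂ} (h1 : (1/2 : ℂ) - z ≠ 0)
    (h2 : PhiF N y w ≠ 0) (h3 : (z - (β:ℂ)) * (w + (β:ℂ)) ≠ 0)
    (h4 : 4 * z * w * (z - w) ≠ 0) :
    DifferentiableAt ℂ (fun z => G11 N n α β x y z w) z := by
  unfold PhiF at h2
  unfold G11 PhiF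
  fun_prop (disch := assumption)

lemma contG (N n : ℕ) (α β x y : ℝ) {S : Set (ℂ × ℂ)}
    (hS : ∀ p ∈ S, (1/2 : ℂ) - p.1 ≠ 0 ∧ PhiF N y p.2 ≠ 0 ∧ (1/2 : ℂ) - p.2 ≠ 0 ∧
      (p.1 - (β:ℂ)) * (p.2 + (β:ℂ)) ≠ 0 ∧ 4 * p.1 * p.2 * (p.1 - p.2) ≠ 0) :
    ContinuousOn (fun p : ℂ × ℂ => G11 N n α β x y p.1 p.2) S := by
  intro p hp
  obtain ⟨h1, h2, h3, h4, h5⟩ := hS p hp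
  apply ContinuousAt.continuousWithinAt
  unfold PhiF at h2
  unfold G11 PhiF
  fun_prop (disch := assumption)

/-! ### Abstract residue algebra -/

lemma resA (Φ P A B : ℂ) (n : ℕ) (a b z : ℂ) (hP : P ≠ 0) (hz : z ≠ 0) (hzb : z - b ≠ 0)
    (hzpb : z + b ≠ 0) (hb : b ≠ 0) :
    Φ / P * (A * B) ^ n * ((z + b) * (-b - b)) / (z - b) *
      ((z + a) * (-b - a) * (z + -b)) / (4 * z * -b * (z - -b))
    = (-((a + b) * (P⁻¹ * B ^ n))) * (Φ * A ^ n * (z + a) / (2 * z)) := by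
  have hD : 4 * z * -b * (z - -b) ≠ 0 := by
    rw [show 4 * z * -b * (z - -b) = -(4 * z * b * (z + b)) by ring]
    exact neg_ne_zero.mpr
      (mul_ne_zero (mul_ne_zero (mul_ne_zero (by norm_num) hz) hb) hzpb)
  have h3 : z * b * P * (-4) ≠ 0 := by
    exact mul_ne_zero (mul_ne_zero (mul_ne_zero hz hb) hP) (by norm_num)
  field_simp [hD]
  rw [sub_neg_eq_add] at *
  field_simp
  ring

/-! ### Inner residue at `w = -β` -/

lemma innerA (N n : ℕ) (α β x y : ℝ) (hβ0 : 0 < β) (hβh : β < 1/2)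
    {r : ℝ} (hr : 0 < r) (hrβ : r < β) (hrh : r < 1/2 - β)
    {z : ℂ} (hz0 : z ≠ 0) (hzh : (1/2 : ℂ) - z ≠ 0) (hzb : z - (β:ℂ) ≠ 0)
    (hzw : ∀ w ∈ closedBall (-(β:ℂ)) r, z - w ≠ 0) :
    cInt (-(β:ℂ)) r (fun w => G11 N n α β x y z w)
      = (-(((α:ℂ) + (β:ℂ)) * fplus N n β y)) * gI N n α x z := by
  -- distances from the center -β
  have d1 : dist (-(β:ℂ)) (-(1/2 : ℂ)) = 1/2 - β := by
    rw [show (-(β:ℂ)) = ((-β : ℝ) : ℂ) by push_cast; ring,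
      show (-(1/2 : ℂ)) = ((-(1/2) : ℝ) : ℂ) by push_cast; ring, cdist,
      show (-β - -(1/2) : ℝ) = 1/2 - β by ring]
    exact abs_of_pos (by linarith)
  have d2 : dist (-(β:ℂ)) ((1/2 : ℂ)) = 1/2 + β := by
    rw [show (-(β:ℂ)) = ((-β : ℝ) : ℂ) by push_cast; ring,
      show ((1/2 : ℂ)) = (((1/2) : ℝ) : ℂ) by norm_num, cdist,
      show (-β - (1/2) : ℝ) = -(1/2 + β) by ring, abs_neg]
    exact abs_of_pos (by linarith)
  have d3 : dist (-(β:ℂ)) (0 : ℂ) = β := by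
    rw [show (-(β:ℂ)) = ((-β : ℝ) : ℂ) by push_cast; ring,
      show ((0 : ℂ)) = (((0:ℝ)) : ℂ) by norm_num, cdist, sub_zero, abs_neg]
    exact abs_of_pos hβ0
  -- facts about points of the closed ball
  have hwf : ∀ w ∈ closedBall (-(β:ℂ)) r,
      (1/2 : ℂ) + w ≠ 0 ∧ (1/2 : ℂ) - w ≠ 0 ∧ w ≠ 0 ∧ PhiF N y w ≠ 0 := by
    intro w hw
    have hw' : dist w (-(β:ℂ)) ≤ r := mem_closedBall.mp hw
    have e1 : w ≠ -(1/2 : ℂ) := ne_pt hw' (by rw [dist_comm] at *; rw [d1]; linarith)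
    have e2 : w ≠ (1/2 : ℂ) := ne_pt hw' (by rw [d2]; linarith)
    have e3 : w ≠ 0 := ne_pt hw' (by rw [d3]; linarith)
    have q1 : (1/2 : ℂ) + w ≠ 0 := fun h => e1 (eq_neg_of_add_eq_zero_right h)
    have q2 : (1/2 : ℂ) - w ≠ 0 := sub_ne_zero.mpr fun h => e2 h.symm
    exact ⟨q1, q2, e3, phi_ne N y q1 q2⟩
  -- differentiability of the residue factor
  have hdiff : ∀ w ∈ closedBall (-(β:ℂ)) r, DifferentiableAt ℂ
      (fun w => PhiF N x z / PhiF N y w * (((1/2 : ℂ) - z) * ((1/2 : ℂ) + w)) ^ n *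
        ((z + (β:ℂ)) * (w - (β:ℂ))) / (z - (β:ℂ)) *
        ((z + (α:ℂ)) * (w - (α:ℂ)) * (z + w)) / (4 * z * w * (z - w))) w := by
    intro w hw
    obtain ⟨q1, q2, q3, q4⟩ := hwf w hw
    have q5 : 4 * z * w * (z - w) ≠ 0 :=
      mul_ne_zero (mul_ne_zero (mul_ne_zero (by norm_num) hz0) q3) (hzw w hw)
    unfold PhiF at q4
    unfold PhiF
    fun_prop (disch := assumption)
  have hcongr : Set.EqOn (fun w => G11 N n α β x y z w)
      (fun w => (w - (-(β:ℂ)))⁻¹ *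
        (PhiF N x z / PhiF N y w * (((1/2 : ℂ) - z) * ((1/2 : ℂ) + w)) ^ n *
          ((z + (β:ℂ)) * (w - (β:ℂ))) / (z - (β:ℂ)) *
          ((z + (α:ℂ)) * (w - (α:ℂ)) * (z + w)) / (4 * z * w * (z - w))))
      (sphere (-(β:ℂ)) r) := by
    intro w _
    beta_reduce
    rw [sub_neg_eq_add]
    simp only [G11, div_eq_mul_inv, mul_inv]
    ring
  rw [cInt_congr hr.le hcongr, cInt_cauchy hr hdiff]
  -- evaluate the residue
  have hbp : (1/2 : ℂ) + (β:ℂ) ≠ 0 := by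
    rw [show (1/2 : ℂ) + (β:ℂ) = ((1/2 + β : ℝ) : ℂ) by push_cast; ring]
    exact_mod_cast (by positivity : (1/2 + β : ℝ) ≠ 0)
  have hbm : (1/2 : ℂ) - (β:ℂ) ≠ 0 := by
    rw [show (1/2 : ℂ) - (β:ℂ) = ((1/2 - β : ℝ) : ℂ) by push_cast; ring]
    exact_mod_cast (by linarith : (1/2 - β : ℝ) ≠ 0)
  have hQP : PhiF N y (β:ℂ) * PhiF N y (-(β:ℂ)) = 1 := phi_mul N y hbp hbm
  have hP : PhiF N y (-(β:ℂ)) ≠ 0 := by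
    intro h; rw [h, mul_zero] at hQP; exact one_ne_zero hQP.symm
  have hQ : PhiF N y (β:ℂ) = (PhiF N y (-(β:ℂ)))⁻¹ := eq_inv_of_mul_eq_one_left hQP
  have hzwb : z - (-(β:ℂ)) ≠ 0 := hzw _ (mem_closedBall_self hr.le)
  have hb0 : (β:ℂ) ≠ 0 := by exact_mod_cast hβ0.ne'
  have hzpb : z + (β:ℂ) ≠ 0 := by
    intro h; exact hzwb (by rw [sub_neg_eq_add, h])
  unfold fplus gI
  rw [hQ]
  beta_reduce
  rw [show (1/2:ℂ) + -(β:ℂ) = 1/2 - (β:ℂ) by ring]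
  exact resA (PhiF N x z) (PhiF N y (-(β:ℂ))) ((1/2:ℂ) - z) ((1/2:ℂ) - (β:ℂ)) n
    (α:ℂ) (β:ℂ) z hP hz0 hzb hzpb hb0

/-! ### Inner residue at `z = β` -/

lemma resB (Φ Q B C : ℂ) (n : ℕ) (a b w : ℂ) (hQ : Q ≠ 0) (hw : w ≠ 0) (hb : b ≠ 0)
    (hwb : w + b ≠ 0) (hbw : b - w ≠ 0) :
    Φ / Q * (B * C) ^ n * ((b + b) * (w - b)) / (w + b) *
      ((b + a) * (w - a) * (b + w)) / (4 * b * w * (b - w))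
    = (-((a + b) * (Φ * B ^ n))) * (C ^ n * (w - a) / (2 * w * Q)) := by
  have hD : 4 * b * w * (b - w) ≠ 0 :=
    mul_ne_zero (mul_ne_zero (mul_ne_zero (by norm_num) hb) hw) hbw
  have h3 : 2 * w * Q ≠ 0 := mul_ne_zero (mul_ne_zero (by norm_num) hw) hQ
  field_simp [hD]
  ring

lemma innerB (N n : ℕ) (α β x y : ℝ) (hβ0 : 0 < β) (hβh : β < 1/2)
    {r : ℝ} (hr : 0 < r) (hrβ : r < β) (hrh : r < 1/2 - β)
    {w : ℂ} (hw0 : w ≠ 0) (hwb : w + (β:ℂ) ≠ 0) (hwy : PhiF N y w ≠ 0)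
    (hzw : ∀ z ∈ closedBall ((β:ℂ)) r, z - w ≠ 0) :
    cInt ((β:ℂ)) r (fun z => G11 N n α β x y z w)
      = (-(((α:ℂ) + (β:ℂ)) * fplus N n β x)) * rhoF N n α y w := by
  have d1 : dist ((β:ℂ)) (0 : ℂ) = β := by
    rw [show ((0:ℂ)) = (((0:ℝ)):ℂ) by norm_num, cdist, sub_zero]
    exact abs_of_pos hβ0
  have d2 : dist ((β:ℂ)) ((1/2 : ℂ)) = 1/2 - β := by
    rw [show ((1/2:ℂ)) = (((1/2:ℝ)):ℂ) by norm_num, cdist,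
      show (β - 1/2 : ℝ) = -(1/2 - β) by ring, abs_neg]
    exact abs_of_pos (by linarith)
  have hdiff : ∀ z ∈ closedBall ((β:ℂ)) r, DifferentiableAt ℂ
      (fun z => PhiF N x z / PhiF N y w * (((1/2 : ℂ) - z) * ((1/2 : ℂ) + w)) ^ n *
        ((z + (β:ℂ)) * (w - (β:ℂ))) / (w + (β:ℂ)) *
        ((z + (α:ℂ)) * (w - (α:ℂ)) * (z + w)) / (4 * z * w * (z - w))) z := by
    intro z hz
    have hz' : dist z ((β:ℂ)) ≤ r := mem_closedBall.mp hz
    have e1 : z ≠ 0 := ne_pt hz' (by rw [d1]; linarith)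
    have e2 : z ≠ (1/2 : ℂ) := ne_pt hz' (by rw [d2]; linarith)
    have q1 : (1/2 : ℂ) - z ≠ 0 := sub_ne_zero.mpr fun h => e2 h.symm
    have q5 : 4 * z * w * (z - w) ≠ 0 :=
      mul_ne_zero (mul_ne_zero (mul_ne_zero (by norm_num) e1) hw0) (hzw z hz)
    unfold PhiF at hwy
    unfold PhiF
    fun_prop (disch := assumption)
  have hcongr : Set.EqOn (fun z => G11 N n α β x y z w)
      (fun z => (z - (β:ℂ))⁻¹ *
        (PhiF N x z / PhiF N y w * (((1/2 : ℂ) - z) * ((1/2 : ℂ) + w)) ^ n *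
          ((z + (β:ℂ)) * (w - (β:ℂ))) / (w + (β:ℂ)) *
          ((z + (α:ℂ)) * (w - (α:ℂ)) * (z + w)) / (4 * z * w * (z - w))))
      (sphere ((β:ℂ)) r) := by
    intro z _
    beta_reduce
    simp only [G11, div_eq_mul_inv, mul_inv]
    ring
  rw [cInt_congr hr.le hcongr, cInt_cauchy hr hdiff]
  have hb0 : (β:ℂ) ≠ 0 := by exact_mod_cast hβ0.ne'
  have hbw : (β:ℂ) - w ≠ 0 := hzw _ (mem_closedBall_self hr.le)
  unfold fplus rhoF
  beta_reduce
  exact resB (PhiF N x (β:ℂ)) (PhiF N y w) ((1/2:ℂ) - (β:ℂ)) ((1/2:ℂ) + w) n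
    (α:ℂ) (β:ℂ) w hwy hw0 hb0 hwb hbw

/-! ### Reflection of `rhoF` -/

lemma resC (P A : ℂ) (n : ℕ) (a z : ℂ) (hP : P ≠ 0) (hz : z ≠ 0) :
    A ^ n * (-z - a) / (2 * -z * P) = P⁻¹ * A ^ n * (z + a) / (2 * z) := by
  have h1 : 2 * -z * P ≠ 0 := by
    rw [show 2 * -z * P = -(2 * z * P) by ring]
    exact neg_ne_zero.mpr (mul_ne_zero (mul_ne_zero (by norm_num) hz) hP)
  field_simp [h1]
  ring

lemma reflectRho (N n : ℕ) (α y : ℝ) {r : ℝ} (hr : 0 < r) (hrh : r < 1/2) :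
    cInt (-(1/2 : ℂ)) r (rhoF N n α y) = -cInt (1/2 : ℂ) r (gI N n α y) := by
  rw [cInt_reflect (1/2 : ℂ) r (rhoF N n α y)]
  congr 1
  apply cInt_congr hr.le
  intro z hz
  have hz' : dist z ((1/2:ℂ)) ≤ r := le_of_eq (mem_sphere.mp hz)
  have d1 : dist ((1/2:ℂ)) (0:ℂ) = 1/2 := by
    rw [Complex.dist_eq, sub_zero, show ((1/2:ℂ)) = (((1/2:ℝ)):ℂ) by norm_num,
      Complex.norm_real, Real.norm_eq_abs]
    norm_num
  have d2 : dist ((1/2:ℂ)) (-(1/2:ℂ)) = 1 := by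
    rw [Complex.dist_eq, show ((1/2:ℂ)) - (-(1/2:ℂ)) = (((1:ℝ)):ℂ) by norm_num,
      Complex.norm_real, Real.norm_eq_abs]
    norm_num
  have e0 : z ≠ 0 := ne_pt hz' (by rw [d1]; linarith)
  have e1 : z ≠ (1/2:ℂ) := by
    have : (0:ℝ) < dist z (1/2:ℂ) := by rw [mem_sphere.mp hz]; exact hr
    exact fun h => by simp [h] at this
  have e2 : z ≠ -(1/2:ℂ) := ne_pt hz' (by rw [d2]; linarith)
  have q1 : (1/2:ℂ) + z ≠ 0 := fun h => e2 (eq_neg_of_add_eq_zero_right h)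
  have q2 : (1/2:ℂ) - z ≠ 0 := sub_ne_zero.mpr fun h => e1 h.symm
  have hQP : PhiF N y z * PhiF N y (-z) = 1 := phi_mul N y q1 q2
  have hP : PhiF N y (-z) ≠ 0 := by
    intro h; rw [h, mul_zero] at hQP; exact one_ne_zero hQP.symm
  have hQ : PhiF N y z = (PhiF N y (-z))⁻¹ := eq_inv_of_mul_eq_one_left hQP
  show rhoF N n α y (-z) = gI N n α y z
  unfold rhoF gI
  rw [hQ, show (1/2:ℂ) + -z = 1/2 - z by ring]
  exact resC (PhiF N y (-z)) ((1/2:ℂ) - z) n (α:ℂ) z hP e0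

/-! ### Deformation of the `g₁` contour -/

lemma deformGI (N n : ℕ) (α x : ℝ) {r R : ℝ} (hr : 0 < r) (hrh : r < 1/2)
    (hR : 0 < R) (hRh : R < 1/2) :
    cInt (1/2 : ℂ) r (gI N n α x) = cInt (1/2 : ℂ) R (gI N n α x) := by
  apply cInt_deform hr hR
  intro z hz
  obtain ⟨hz1, hz2⟩ := hz
  have hz1' : dist z ((1/2:ℂ)) ≤ max r R := mem_closedBall.mp hz1
  have hz2' : min r R ≤ dist z ((1/2:ℂ)) := by
    by_contra h
    exact hz2 (mem_ball.mpr (lt_of_not_ge h))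
  have d1 : dist ((1/2:ℂ)) (0:ℂ) = 1/2 := by
    rw [Complex.dist_eq, sub_zero, show ((1/2:ℂ)) = (((1/2:ℝ)):ℂ) by norm_num,
      Complex.norm_real, Real.norm_eq_abs]
    norm_num
  have e0 : z ≠ 0 := ne_pt hz1' (by rw [d1]; exact max_lt hrh hRh)
  have e1 : z ≠ (1/2:ℂ) := by
    have : (0:ℝ) < dist z (1/2:ℂ) := lt_of_lt_of_le (lt_min hr hR) hz2'
    exact fun h => by simp [h] at this
  have q2 : (1/2:ℂ) - z ≠ 0 := sub_ne_zero.mpr fun h => e1 h.symm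
  have q3 : 2 * z ≠ 0 := mul_ne_zero (by norm_num) e0
  unfold gI PhiF
  fun_prop (disch := assumption)

set_option maxHeartbeats 1600000 in
lemma ne_center {z c : ℂ} {r : ℝ} (hz : z ∈ sphere c r) (hr : 0 < r) : z ≠ c := by
  have h := mem_sphere.mp hz
  intro he; rw [he, dist_self] at h; linarith

set_option maxHeartbeats 1600000 in
/-- Decomposition of the (11) entry:
K₁₁(x,y) = K̄₁₁(x,y) + (α+β)·(g₁(x)·f₊^β(y) − f₊^β(x)·g₁(y)). -/
theorem stmt3 (N : ℕ) (hN : 1 ≤ N) (n : ℕ) (hn : n ≤ N - 1)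
    (α β : ℝ) (hα : α ∈ Set.Ioo (-(1 / 2) : ℝ) (1 / 2)) (hβ : β ∈ Set.Ioo (0 : ℝ) (1 / 2))
    (hab : 0 < α + β) (hne : α ≠ β) (x y : ℝ)
    -- K₁₁, first double integral: z ∈ Γ_{1/2}, w ∈ Γ_{−1/2}
    (r₁ r₂ : ℝ) (h₁ : okCircle (1 / 2) r₁ [0, β]) (h₂ : okCircle (-(1 / 2)) r₂ [0, -β])
    (h₁₂ : disjC (1 / 2) r₁ (-(1 / 2)) r₂)
    -- K₁₁, second double integral: z ∈ Γ_{1/2}, w ∈ Γ_{−β}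
    (r₃ r₄ : ℝ) (h₃ : okCircle (1 / 2) r₃ [0, β]) (h₄ : okCircle (-β) r₄ [0, -(1 / 2)])
    (h₃₄ : disjC (1 / 2) r₃ (-β) r₄)
    -- K₁₁, third double integral: z ∈ Γ_{β}, w ∈ Γ_{−1/2}
    (r₅ r₆ : ℝ) (h₅ : okCircle β r₅ [0, 1 / 2]) (h₆ : okCircle (-(1 / 2)) r₆ [0, -β])
    (h₅₆ : disjC β r₅ (-(1 / 2)) r₆)
    -- K̄₁₁: z ∈ Γ_{1/2}, w ∈ Γ_{−1/2}
    (r₇ r₈ : ℝ) (h₇ : okCircle (1 / 2) r₇ [0, β]) (h₈ : okCircle (-(1 / 2)) r₈ [0, -β])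
    (h₇₈ : disjC (1 / 2) r₇ (-(1 / 2)) r₈)
    -- radius for g₁
    (rg : ℝ) (hg : okCircle (1 / 2) rg [0]) :
    -(cInt (1 / 2) r₁ (fun z => cInt (-(1 / 2)) r₂ (fun w => G11 N n α β x y z w)) +
        cInt (1 / 2) r₃ (fun z => cInt (-(β : ℂ)) r₄ (fun w => G11 N n α β x y z w)) +
        cInt (β : ℂ) r₅ (fun z => cInt (-(1 / 2)) r₆ (fun w => G11 N n α β x y z w))) =
      -cInt (1 / 2) r₇ (fun z => cInt (-(1 / 2)) r₈ (fun w => G11 N n α β x y z w)) +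
        ((α : ℂ) + (β : ℂ)) *
          (g1F N n α x rg * fplus N n β y - fplus N n β x * g1F N n α y rg) := by
  obtain ⟨hα1, hα2⟩ := hα
  obtain ⟨hβ0, hβh⟩ := hβ
  -- real radius facts
  have h₁a : r₁ < 1/2 := by
    have := h₁.2 0 (by simp); rwa [sub_zero, abs_of_pos (by norm_num)] at this
  have h₁b : r₁ < 1/2 - β := by
    have := h₁.2 β (by simp); rwa [abs_of_pos (by linarith)] at this
  have h₃a : r₃ < 1/2 := by
    have := h₃.2 0 (by simp); rwa [sub_zero, abs_of_pos (by norm_num)] at this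
  have h₃b : r₃ < 1/2 - β := by
    have := h₃.2 β (by simp); rwa [abs_of_pos (by linarith)] at this
  have h₇a : r₇ < 1/2 := by
    have := h₇.2 0 (by simp); rwa [sub_zero, abs_of_pos (by norm_num)] at this
  have h₇b : r₇ < 1/2 - β := by
    have := h₇.2 β (by simp); rwa [abs_of_pos (by linarith)] at this
  have h₂a : r₂ < 1/2 := by
    have := h₂.2 0 (by simp); rwa [sub_zero, abs_neg, abs_of_pos (by norm_num)] at this
  have h₂b : r₂ < 1/2 - β := by
    have := h₂.2 (-β) (by simp)
    rwa [show (-(1/2) - -β : ℝ) = -(1/2 - β) by ring, abs_neg,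
      abs_of_pos (by linarith)] at this
  have h₆a : r₆ < 1/2 := by
    have := h₆.2 0 (by simp); rwa [sub_zero, abs_neg, abs_of_pos (by norm_num)] at this
  have h₆b : r₆ < 1/2 - β := by
    have := h₆.2 (-β) (by simp)
    rwa [show (-(1/2) - -β : ℝ) = -(1/2 - β) by ring, abs_neg,
      abs_of_pos (by linarith)] at this
  have h₈a : r₈ < 1/2 := by
    have := h₈.2 0 (by simp); rwa [sub_zero, abs_neg, abs_of_pos (by norm_num)] at this
  have h₈b : r₈ < 1/2 - β := by
    have := h₈.2 (-β) (by simp)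
    rwa [show (-(1/2) - -β : ℝ) = -(1/2 - β) by ring, abs_neg,
      abs_of_pos (by linarith)] at this
  have h₄a : r₄ < β := by
    have := h₄.2 0 (by simp); rwa [sub_zero, abs_neg, abs_of_pos hβ0] at this
  have h₄b : r₄ < 1/2 - β := by
    have := h₄.2 (-(1/2)) (by simp)
    rwa [show (-β - -(1/2) : ℝ) = 1/2 - β by ring, abs_of_pos (by linarith)] at this
  have h₅a : r₅ < β := by
    have := h₅.2 0 (by simp); rwa [sub_zero, abs_of_pos hβ0] at this
  have h₅b : r₅ < 1/2 - β := by
    have := h₅.2 (1/2) (by simp)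
    rwa [show (β - 1/2 : ℝ) = -(1/2 - β) by ring, abs_neg, abs_of_pos (by linarith)] at this
  have hga : rg < 1/2 := by
    have := hg.2 0 (by simp); rwa [sub_zero, abs_of_pos (by norm_num)] at this
  have hd12 : r₁ + r₂ < 1 := by
    have := h₁₂; unfold disjC at this
    rwa [show ((1:ℝ)/2 - -(1/2)) = 1 by norm_num, abs_one] at this
  have hd34 : r₃ + r₄ < 1/2 + β := by
    have := h₃₄; unfold disjC at this
    rwa [show ((1:ℝ)/2 - -β) = 1/2 + β by ring, abs_of_pos (by linarith)] at this
  have hd56 : r₅ + r₆ < β + 1/2 := by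
    have := h₅₆; unfold disjC at this
    rwa [show (β - -(1/2) : ℝ) = β + 1/2 by ring, abs_of_pos (by linarith)] at this
  -- complex distance facts
  have D1 : dist ((1/2:ℂ)) (0:ℂ) = 1/2 := by
    rw [Complex.dist_eq, sub_zero, show ((1/2:ℂ)) = (((1/2:ℝ)):ℂ) by norm_num,
      Complex.norm_real, Real.norm_eq_abs]
    norm_num
  have D2 : dist ((1/2:ℂ)) ((β:ℂ)) = 1/2 - β := by
    rw [Complex.dist_eq, show (1/2:ℂ) - (β:ℂ) = ((1/2 - β : ℝ):ℂ) by push_cast; ring,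
      Complex.norm_real, Real.norm_eq_abs]
    exact abs_of_pos (by linarith)
  have D3 : dist ((1/2:ℂ)) (-(β:ℂ)) = 1/2 + β := by
    rw [Complex.dist_eq, show (1/2:ℂ) - (-(β:ℂ)) = ((1/2 + β : ℝ):ℂ) by push_cast; ring,
      Complex.norm_real, Real.norm_eq_abs]
    exact abs_of_pos (by linarith)
  have D4 : dist ((1/2:ℂ)) (-(1/2:ℂ)) = 1 := by
    rw [Complex.dist_eq, show ((1/2:ℂ)) - (-(1/2:ℂ)) = (((1:ℝ)):ℂ) by norm_num,
      Complex.norm_real, Real.norm_eq_abs]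
    norm_num
  have D5 : dist (-(1/2:ℂ)) (0:ℂ) = 1/2 := by
    rw [Complex.dist_eq, show (-(1/2:ℂ)) - 0 = ((-(1/2) : ℝ):ℂ) by push_cast; norm_num,
      Complex.norm_real, Real.norm_eq_abs, abs_neg]
    exact abs_of_pos (by norm_num)
  have D6 : dist (-(1/2:ℂ)) (-(β:ℂ)) = 1/2 - β := by
    rw [Complex.dist_eq, show (-(1/2:ℂ)) - (-(β:ℂ)) = ((-(1/2 - β) : ℝ):ℂ) by push_cast; ring,
      Complex.norm_real, Real.norm_eq_abs, abs_neg]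
    exact abs_of_pos (by linarith)
  have D7 : dist (-(1/2:ℂ)) ((1/2:ℂ)) = 1 := by rw [dist_comm]; exact D4
  have D8 : dist ((β:ℂ)) (0:ℂ) = β := by
    rw [Complex.dist_eq, sub_zero, Complex.norm_real, Real.norm_eq_abs]
    exact abs_of_pos hβ0
  have D9 : dist ((β:ℂ)) ((1/2:ℂ)) = 1/2 - β := by rw [dist_comm]; exact D2
  have D10 : dist ((β:ℂ)) (-(1/2:ℂ)) = β + 1/2 := by
    rw [Complex.dist_eq, show ((β:ℂ)) - (-(1/2:ℂ)) = ((β + 1/2 : ℝ):ℂ) by push_cast; ring,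
      Complex.norm_real, Real.norm_eq_abs]
    exact abs_of_pos (by linarith)
  have D11 : dist (-(1/2:ℂ)) ((β:ℂ)) = β + 1/2 := by rw [dist_comm]; exact D10
  -- second double integral
  have hI₂ : cInt (1 / 2) r₃ (fun z => cInt (-(β : ℂ)) r₄ (fun w => G11 N n α β x y z w))
      = (-(((α:ℂ) + (β:ℂ)) * fplus N n β y)) * g1F N n α x rg := by
    have step1 : Set.EqOn (fun z => cInt (-(β : ℂ)) r₄ (fun w => G11 N n α β x y z w))
        (fun z => (-(((α:ℂ) + (β:ℂ)) * fplus N n β y)) * gI N n α x z)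
        (sphere ((1/2 : ℂ)) r₃) := by
      intro z hz
      have hz' : dist z ((1/2:ℂ)) ≤ r₃ := le_of_eq (mem_sphere.mp hz)
      have hz0 : z ≠ 0 := ne_pt hz' (by rw [D1]; linarith)
      have hzh : (1/2:ℂ) - z ≠ 0 := sub_ne_zero.mpr (ne_center hz h₃.1).symm
      have hzb : z - (β:ℂ) ≠ 0 := sub_ne_zero.mpr (ne_pt hz' (by rw [D2]; linarith))
      have hzw : ∀ w ∈ closedBall (-(β:ℂ)) r₄, z - w ≠ 0 := by
        intro w hw
        exact sub_ne_zero.mpr (ne_far hz' (mem_closedBall.mp hw) (by rw [D3]; linarith))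
      exact innerA N n α β x y hβ0 hβh h₄.1 h₄a h₄b hz0 hzh hzb hzw
    rw [cInt_congr h₃.1.le step1, cInt_const_mul, g1F_eq,
      deformGI N n α x h₃.1 h₃a hg.1 hga]
  -- third double integral
  have hI₃ : cInt (β : ℂ) r₅ (fun z => cInt (-(1 / 2)) r₆ (fun w => G11 N n α β x y z w))
      = ((α:ℂ) + (β:ℂ)) * fplus N n β x * g1F N n α y rg := by
    have hcont : ContinuousOn (fun p : ℂ × ℂ => G11 N n α β x y p.1 p.2)
        (sphere ((β:ℂ)) r₅ ×ˢ sphere (-(1/2:ℂ)) r₆) := by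
      apply contG
      rintro ⟨z, w⟩ ⟨hz, hw⟩
      have hz' : dist z ((β:ℂ)) ≤ r₅ := le_of_eq (mem_sphere.mp hz)
      have hw' : dist w (-(1/2:ℂ)) ≤ r₆ := le_of_eq (mem_sphere.mp hw)
      have c1 : (1/2:ℂ) - z ≠ 0 :=
        sub_ne_zero.mpr (Ne.symm (ne_pt hz' (by rw [D9]; linarith)))
      have q1 : (1/2:ℂ) + w ≠ 0 := fun h =>
        (ne_center hw h₆.1) (eq_neg_of_add_eq_zero_right h)
      have q2 : (1/2:ℂ) - w ≠ 0 :=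
        sub_ne_zero.mpr (Ne.symm (ne_pt hw' (by rw [D7]; linarith)))
      have c4 : (z - (β:ℂ)) * (w + (β:ℂ)) ≠ 0 := by
        refine mul_ne_zero (sub_ne_zero.mpr (ne_center hz h₅.1)) fun h => ?_
        exact (ne_pt hw' (by rw [D6]; linarith)) (eq_neg_of_add_eq_zero_left h)
      have c5 : 4 * z * w * (z - w) ≠ 0 := by
        refine mul_ne_zero (mul_ne_zero (mul_ne_zero (by norm_num) ?_) ?_)
          (sub_ne_zero.mpr (ne_far hz' hw' (by rw [D10]; linarith)))
        · exact ne_pt hz' (by rw [D8]; linarith)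
        · exact ne_pt hw' (by rw [D5]; linarith)
      exact ⟨c1, phi_ne N y q1 q2, q2, c4, c5⟩
    calc cInt (β : ℂ) r₅ (fun z => cInt (-(1 / 2)) r₆ (fun w => G11 N n α β x y z w))
        = cInt (-(1/2:ℂ)) r₆ (fun w => cInt ((β:ℂ)) r₅ (fun z => G11 N n α β x y z w)) :=
          cInt_swap h₅.1.le h₆.1.le (fun z w => G11 N n α β x y z w) hcont
      _ = cInt (-(1/2:ℂ)) r₆
            (fun w => (-(((α:ℂ) + (β:ℂ)) * fplus N n β x)) * rhoF N n α y w) := by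
          apply cInt_congr h₆.1.le
          intro w hw
          have hw' : dist w (-(1/2:ℂ)) ≤ r₆ := le_of_eq (mem_sphere.mp hw)
          have hw0 : w ≠ 0 := ne_pt hw' (by rw [D5]; linarith)
          have hwb : w + (β:ℂ) ≠ 0 := fun h =>
            (ne_pt hw' (by rw [D6]; linarith)) (eq_neg_of_add_eq_zero_left h)
          have q1 : (1/2:ℂ) + w ≠ 0 := fun h =>
            (ne_center hw h₆.1) (eq_neg_of_add_eq_zero_right h)
          have q2 : (1/2:ℂ) - w ≠ 0 :=
            sub_ne_zero.mpr (Ne.symm (ne_pt hw' (by rw [D7]; linarith)))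
          have hzw : ∀ z ∈ closedBall ((β:ℂ)) r₅, z - w ≠ 0 := by
            intro z hzc
            exact sub_ne_zero.mpr
              (ne_far (mem_closedBall.mp hzc) hw' (by rw [D10]; linarith))
          exact innerB N n α β x y hβ0 hβh h₅.1 h₅a h₅b hw0 hwb (phi_ne N y q1 q2) hzw
      _ = (-(((α:ℂ) + (β:ℂ)) * fplus N n β x)) * cInt (-(1/2:ℂ)) r₆ (rhoF N n α y) :=
          cInt_const_mul _ _ _ _
      _ = ((α:ℂ) + (β:ℂ)) * fplus N n β x * g1F N n α y rg := by
          rw [reflectRho N n α y h₆.1 h₆a, g1F_eq, deformGI N n α y h₆.1 h₆a hg.1 hga]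
          ring
  -- first double integral: radius independence
  have mkcont : ∀ r' : ℝ, 0 < r' → r' < 1/2 → r' < 1/2 - β →
      ContinuousOn (fun p : ℂ × ℂ => G11 N n α β x y p.1 p.2)
        (sphere ((1/2:ℂ)) r' ×ˢ sphere (-(1/2:ℂ)) r₈) := by
    intro r' hr0 hra hrb
    apply contG
    rintro ⟨z, w⟩ ⟨hz, hw⟩
    have hz' : dist z ((1/2:ℂ)) ≤ r' := le_of_eq (mem_sphere.mp hz)
    have hw' : dist w (-(1/2:ℂ)) ≤ r₈ := le_of_eq (mem_sphere.mp hw)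
    have c1 : (1/2:ℂ) - z ≠ 0 := sub_ne_zero.mpr (ne_center hz hr0).symm
    have q1 : (1/2:ℂ) + w ≠ 0 := fun h =>
      (ne_center hw h₈.1) (eq_neg_of_add_eq_zero_right h)
    have q2 : (1/2:ℂ) - w ≠ 0 :=
      sub_ne_zero.mpr (Ne.symm (ne_pt hw' (by rw [D7]; linarith)))
    have c4 : (z - (β:ℂ)) * (w + (β:ℂ)) ≠ 0 := by
      refine mul_ne_zero (sub_ne_zero.mpr (ne_pt hz' (by rw [D2]; linarith))) fun h => ?_
      exact (ne_pt hw' (by rw [D6]; linarith)) (eq_neg_of_add_eq_zero_left h)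
    have c5 : 4 * z * w * (z - w) ≠ 0 := by
      refine mul_ne_zero (mul_ne_zero (mul_ne_zero (by norm_num) ?_) ?_)
        (sub_ne_zero.mpr (ne_far hz' hw' (by rw [D4]; linarith)))
      · exact ne_pt hz' (by rw [D1]; linarith)
      · exact ne_pt hw' (by rw [D5]; linarith)
    exact ⟨c1, phi_ne N y q1 q2, q2, c4, c5⟩
  have hI₁ : cInt (1 / 2) r₁ (fun z => cInt (-(1 / 2)) r₂ (fun w => G11 N n α β x y z w))
      = cInt (1 / 2) r₇ (fun z => cInt (-(1 / 2)) r₈ (fun w => G11 N n α β x y z w)) := by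
    have stepA : Set.EqOn (fun z => cInt (-(1/2:ℂ)) r₂ (fun w => G11 N n α β x y z w))
        (fun z => cInt (-(1/2:ℂ)) r₈ (fun w => G11 N n α β x y z w))
        (sphere ((1/2:ℂ)) r₁) := by
      intro z hz
      have hz' : dist z ((1/2:ℂ)) ≤ r₁ := le_of_eq (mem_sphere.mp hz)
      have hz0 : z ≠ 0 := ne_pt hz' (by rw [D1]; linarith)
      have hzb : z - (β:ℂ) ≠ 0 := sub_ne_zero.mpr (ne_pt hz' (by rw [D2]; linarith))
      apply cInt_deform h₂.1 h₈.1
      intro w hw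
      obtain ⟨hw1, hw2⟩ := hw
      have hw1' : dist w (-(1/2:ℂ)) ≤ max r₂ r₈ := mem_closedBall.mp hw1
      have hw2' : min r₂ r₈ ≤ dist w (-(1/2:ℂ)) := by
        by_contra h
        exact hw2 (mem_ball.mpr (lt_of_not_ge h))
      have hmax : max r₂ r₈ < 1/2 - β := max_lt h₂b h₈b
      have hw0 : w ≠ 0 := ne_pt hw1' (by rw [D5]; linarith)
      have hwc : w ≠ -(1/2:ℂ) := by
        have hd : (0:ℝ) < dist w (-(1/2:ℂ)) := lt_of_lt_of_le (lt_min h₂.1 h₈.1) hw2'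
        exact fun h => by simp [h] at hd
      have q1 : (1/2:ℂ) + w ≠ 0 := fun h => hwc (eq_neg_of_add_eq_zero_right h)
      have q2 : (1/2:ℂ) - w ≠ 0 :=
        sub_ne_zero.mpr (Ne.symm (ne_pt hw1' (by rw [D7]; linarith)))
      have hwb : w + (β:ℂ) ≠ 0 := fun h =>
        (ne_pt hw1' (by rw [D6]; linarith)) (eq_neg_of_add_eq_zero_left h)
      have hzw : z - w ≠ 0 := sub_ne_zero.mpr (ne_far hz' hw1' (by rw [D4]; linarith))
      exact gdiffW N n α β x y (phi_ne N y q1 q2) q2 (mul_ne_zero hzb hwb)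
        (mul_ne_zero (mul_ne_zero (mul_ne_zero (by norm_num) hz0) hw0) hzw)
    have stepC : Set.EqOn (fun w => cInt ((1/2:ℂ)) r₁ (fun z => G11 N n α β x y z w))
        (fun w => cInt ((1/2:ℂ)) r₇ (fun z => G11 N n α β x y z w))
        (sphere (-(1/2:ℂ)) r₈) := by
      intro w hw
      have hw' : dist w (-(1/2:ℂ)) ≤ r₈ := le_of_eq (mem_sphere.mp hw)
      have hw0 : w ≠ 0 := ne_pt hw' (by rw [D5]; linarith)
      have q1 : (1/2:ℂ) + w ≠ 0 := fun h =>
        (ne_center hw h₈.1) (eq_neg_of_add_eq_zero_right h)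
      have q2 : (1/2:ℂ) - w ≠ 0 :=
        sub_ne_zero.mpr (Ne.symm (ne_pt hw' (by rw [D7]; linarith)))
      have hwb : w + (β:ℂ) ≠ 0 := fun h =>
        (ne_pt hw' (by rw [D6]; linarith)) (eq_neg_of_add_eq_zero_left h)
      apply cInt_deform h₁.1 h₇.1
      intro z hz
      obtain ⟨hz1, hz2⟩ := hz
      have hz1' : dist z ((1/2:ℂ)) ≤ max r₁ r₇ := mem_closedBall.mp hz1
      have hz2' : min r₁ r₇ ≤ dist z ((1/2:ℂ)) := by
        by_contra h
        exact hz2 (mem_ball.mpr (lt_of_not_ge h))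
      have hmax : max r₁ r₇ < 1/2 := max_lt h₁a h₇a
      have hmax' : max r₁ r₇ < 1/2 - β := max_lt h₁b h₇b
      have hz0 : z ≠ 0 := ne_pt hz1' (by rw [D1]; linarith)
      have hzc : z ≠ (1/2:ℂ) := by
        have hd : (0:ℝ) < dist z ((1/2:ℂ)) := lt_of_lt_of_le (lt_min h₁.1 h₇.1) hz2'
        exact fun h => by simp [h] at hd
      have c1 : (1/2:ℂ) - z ≠ 0 := sub_ne_zero.mpr fun h => hzc h.symm
      have hzb : z - (β:ℂ) ≠ 0 := sub_ne_zero.mpr (ne_pt hz1' (by rw [D2]; linarith))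
      have hzw : z - w ≠ 0 := sub_ne_zero.mpr (ne_far hz1' hw' (by rw [D4]; linarith))
      exact gdiffZ N n α β x y c1 (phi_ne N y q1 q2) (mul_ne_zero hzb hwb)
        (mul_ne_zero (mul_ne_zero (mul_ne_zero (by norm_num) hz0) hw0) hzw)
    calc cInt (1 / 2) r₁ (fun z => cInt (-(1 / 2)) r₂ (fun w => G11 N n α β x y z w))
        = cInt (1 / 2) r₁ (fun z => cInt (-(1 / 2)) r₈ (fun w => G11 N n α β x y z w)) :=
          cInt_congr h₁.1.le stepA
      _ = cInt (-(1/2:ℂ)) r₈ (fun w => cInt ((1/2:ℂ)) r₁ (fun z => G11 N n α β x y z w)) :=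
          cInt_swap h₁.1.le h₈.1.le (fun z w => G11 N n α β x y z w)
            (mkcont r₁ h₁.1 h₁a h₁b)
      _ = cInt (-(1/2:ℂ)) r₈ (fun w => cInt ((1/2:ℂ)) r₇ (fun z => G11 N n α β x y z w)) :=
          cInt_congr h₈.1.le stepC
      _ = cInt (1 / 2) r₇ (fun z => cInt (-(1 / 2)) r₈ (fun w => G11 N n α β x y z w)) :=
          (cInt_swap h₇.1.le h₈.1.le (fun z w => G11 N n α β x y z w)
            (mkcont r₇ h₇.1 h₇a h₇b)).symm
  rw [hI₁, hI₂, hI₃]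
  ring
end

section
/- Fix integers N ≥ 1 and 0 ≤ n ≤ N−1 and a real ε ∈ (0,1/2). Then there exists a constant C > 0, depending only on N, n and ε, such that for every α ∈ [−1/2+ε, 1/2−ε] and every x ≥ 0: |g₁(x)| ≤ C·e^{−(1/2−ε/2)·x} and |g₂(x)| ≤ C·e^{(1/2−ε)·x}. -/
open Complex

/-- Compatibility shim: the complex absolute value as a bundled absolute value (the norm). -/
noncomputable def Complex.abs : AbsoluteValue ℂ ℝ :=
  IsAbsoluteValue.toAbsoluteValue (norm : ℂ → ℝ)

lemma Complex.norm_eq_abs (z : ℂ) : ‖z‖ = Complex.abs z := rfl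

lemma Complex.abs_ofReal (r : ℝ) : Complex.abs (r : ℂ) = |r| := by
  rw [← Complex.norm_eq_abs, Complex.norm_real, Real.norm_eq_abs]

lemma Complex.abs_I : Complex.abs Complex.I = 1 := by
  rw [← Complex.norm_eq_abs, Complex.norm_I]

lemma Complex.abs_two : Complex.abs 2 = 2 := by
  rw [← Complex.norm_eq_abs]; norm_num

lemma Complex.abs_exp (z : ℂ) : Complex.abs (Complex.exp z) = Real.exp z.re := by
  rw [← Complex.norm_eq_abs, Complex.norm_exp]

lemma Complex.abs_re_le_abs (z : ℂ) : |z.re| ≤ Complex.abs z := by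
  rw [← Complex.norm_eq_abs]; exact Complex.abs_re_le_norm z

open Metric in
lemma deform {c : ℂ} {f : ℂ → ℂ} {r ρ : ℝ} (hr : 0 < r) (hρ : 0 < ρ)
    (hd : ∀ z : ℂ, min r ρ ≤ Complex.abs (z - c) → Complex.abs (z - c) ≤ max r ρ →
      DifferentiableAt ℂ f z) :
    cInt c r f = cInt c ρ f := by
  simp only [← Complex.norm_eq_abs] at hd
  unfold cInt
  congr 1
  rcases le_total r ρ with h | h
  · refine (Complex.circleIntegral_eq_of_differentiable_on_annulus_off_countable hr h
      Set.countable_empty (fun z hz => ?_) (fun z hz => ?_)).symm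
    · rcases hz with ⟨h1, h2⟩
      rw [mem_closedBall, Complex.dist_eq] at h1
      rw [mem_ball, Complex.dist_eq, not_lt] at h2
      exact (hd z (by simp [min_eq_left h, h2]) (by simp [max_eq_right h, h1])).continuousAt.continuousWithinAt
    · rcases hz.1 with ⟨h1, h2⟩
      rw [mem_ball, Complex.dist_eq] at h1
      rw [mem_closedBall, Complex.dist_eq, not_le] at h2
      exact hd z (by simp [min_eq_left h, h2.le]) (by simp [max_eq_right h, h1.le])
  · refine Complex.circleIntegral_eq_of_differentiable_on_annulus_off_countable hρ h
      Set.countable_empty (fun z hz => ?_) (fun z hz => ?_)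
    · rcases hz with ⟨h1, h2⟩
      rw [mem_closedBall, Complex.dist_eq] at h1
      rw [mem_ball, Complex.dist_eq, not_lt] at h2
      exact (hd z (by simp [min_eq_right h, h2]) (by simp [max_eq_left h, h1])).continuousAt.continuousWithinAt
    · rcases hz.1 with ⟨h1, h2⟩
      rw [mem_ball, Complex.dist_eq] at h1
      rw [mem_closedBall, Complex.dist_eq, not_le] at h2
      exact hd z (by simp [min_eq_right h, h2.le]) (by simp [max_eq_left h, h1.le])

lemma cInt_abs_le {c : ℂ} {r M : ℝ} (h0 : 0 ≤ r) {f : ℂ → ℂ}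
    (hf : ∀ z ∈ Metric.sphere c r, Complex.abs (f z) ≤ M) :
    Complex.abs (cInt c r f) ≤ r * M := by
  have h2 : ‖∮ z in C(c, r), f z‖ ≤ 2 * Real.pi * r * M :=
    circleIntegral.norm_integral_le_of_norm_le_const h0
      (fun z hz => by simpa [Complex.norm_eq_abs] using hf z hz)
  rw [cInt, map_mul]
  have h1 : Complex.abs (2 * ↑Real.pi * Complex.I)⁻¹ = (2 * Real.pi)⁻¹ := by
    simp [map_inv₀, map_mul, Complex.abs_I, Complex.abs_two, Complex.abs_ofReal, abs_of_pos Real.pi_pos]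
  rw [h1, Complex.norm_eq_abs] at *
  have hπ : (0:ℝ) < 2 * Real.pi := by positivity
  calc (2 * Real.pi)⁻¹ * Complex.abs (∮ z in C(c, r), f z)
      ≤ (2 * Real.pi)⁻¹ * (2 * Real.pi * r * M) := mul_le_mul_of_nonneg_left h2 (by positivity)
    _ = r * M := by field_simp

lemma diffAt1 (N n : ℕ) (x α : ℝ) {z : ℂ} (h1 : (1/2:ℂ) - z ≠ 0) (h0 : z ≠ 0) :
    DifferentiableAt ℂ (fun z => PhiF N x z * ((1/2:ℂ) - z) ^ n * (z + (α:ℂ)) / (2 * z)) z := by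
  have h0' : (2:ℂ) * z ≠ 0 := mul_ne_zero two_ne_zero h0
  apply DifferentiableAt.div _ (by fun_prop) h0'
  apply DifferentiableAt.mul _ (by fun_prop)
  apply DifferentiableAt.mul
  · exact ((differentiableAt_id.const_mul _).cexp).mul
      ((((differentiableAt_const _).add differentiableAt_id).div
        ((differentiableAt_const _).sub differentiableAt_id) h1).pow _)
  · exact (((differentiableAt_const _).sub differentiableAt_id).pow _)

lemma diffAt2' (N n : ℕ) (x : ℝ) {z : ℂ} (h1 : (1/2:ℂ) - z ≠ 0) (h2 : (1/2:ℂ) + z ≠ 0) :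
    DifferentiableAt ℂ (fun z => PhiF N x z * ((1/2:ℂ) + z)⁻¹ ^ n) z := by
  apply DifferentiableAt.mul
  · exact ((differentiableAt_id.const_mul _).cexp).mul
      ((((differentiableAt_const _).add differentiableAt_id).div
        ((differentiableAt_const _).sub differentiableAt_id) h1).pow _)
  · exact (((differentiableAt_const _).add differentiableAt_id).inv h2).pow _

lemma diffAt2 (N n : ℕ) (x α : ℝ) {z : ℂ} (h1 : (1/2:ℂ) - z ≠ 0) (h2 : (1/2:ℂ) + z ≠ 0)
    (hα : z - (α:ℂ) ≠ 0) :
    DifferentiableAt ℂ (fun z => PhiF N x z * ((1/2:ℂ) + z)⁻¹ ^ n / (z - (α:ℂ))) z := by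
  have hden : DifferentiableAt ℂ (fun z : ℂ => z - (α:ℂ)) z := by fun_prop
  exact (diffAt2' N n x h1 h2).div hden hα

lemma abs_PhiF (N : ℕ) (x : ℝ) (z : ℂ) :
    Complex.abs (PhiF N x z) = Real.exp (-(x * z.re)) *
      (Complex.abs ((1/2:ℂ) + z) / Complex.abs ((1/2:ℂ) - z)) ^ (N - 1) := by
  rw [PhiF, map_mul, map_pow, map_div₀, Complex.abs_exp]
  congr 2
  simp [Complex.mul_re]

lemma abs_sub_le' (a b : ℂ) : Complex.abs (a - b) ≤ Complex.abs a + Complex.abs b := by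
  simpa [← Complex.norm_eq_abs] using norm_sub_le a b

example : True := trivial


set_option maxHeartbeats 1600000 in
open Metric in
/-- There is C > 0, depending only on N, n, ε, such that for all
α ∈ [−1/2+ε, 1/2−ε] and x ≥ 0: |g₁(x)| ≤ C·e^{−(1/2−ε/2)x} and |g₂(x)| ≤ C·e^{(1/2−ε)x}
(the contour integrals taken over any admissible small circles). -/
theorem stmt9 (N : ℕ) (hN : 1 ≤ N) (n : ℕ) (hn : n ≤ N - 1) (ε : ℝ) (hε : ε ∈ Set.Ioo (0 : ℝ) (1 / 2)) :
    ∃ C : ℝ, 0 < C ∧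
      ∀ α : ℝ, α ∈ Set.Icc (-(1 / 2) + ε) (1 / 2 - ε) → ∀ x : ℝ, 0 ≤ x →
        (∀ r : ℝ, okCircle (1 / 2) r [0] →
          norm (cInt (1 / 2) r
              (fun z => PhiF N x z * ((1 / 2 : ℂ) - z) ^ n * (z + (α : ℂ)) / (2 * z))) ≤
            C * Real.exp (-(1 / 2 - ε / 2) * x)) ∧
        (∀ r₁ r₂ : ℝ, okCircle (1 / 2) r₁ [α, -(1 / 2)] → okCircle α r₂ [1 / 2, -(1 / 2)] →
          disjC (1 / 2) r₁ α r₂ →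
          norm
              (cInt (1 / 2) r₁
                  (fun z => PhiF N x z * ((1 / 2 : ℂ) + z)⁻¹ ^ n / (z - (α : ℂ))) +
                cInt (α : ℂ) r₂
                  (fun z => PhiF N x z * ((1 / 2 : ℂ) + z)⁻¹ ^ n / (z - (α : ℂ)))) ≤
            C * Real.exp ((1 / 2 - ε) * x)) := by
  simp only [Complex.norm_eq_abs]
  obtain ⟨hε0, hε2⟩ := hε
  set A : ℝ := (3/ε)^(N-1) with hA_def
  have hA : 0 < A := by positivity
  have hB : (0:ℝ) < (2:ℝ)^n := by positivity
  have hD : (0:ℝ) < (1/ε)^(N-1) * (1/ε)^n := by positivity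
  refine ⟨3*A + A*2^n + (1/ε)^(N-1)*(1/ε)^n, by positivity, ?_⟩
  intro α hα x hx
  obtain ⟨hα1, hα2⟩ := hα
  set ρ : ℝ := ε/2 with hρ_def
  have hρ0 : 0 < ρ := by positivity
  have hρ4 : ρ < 1/4 := by rw [hρ_def]; linarith
  constructor
  · -- first bound
    rintro r ⟨hr0, hra⟩
    have hr_half : r < 1/2 := by
      have := hra 0 (by simp)
      rw [show |(1/2:ℝ) - 0| = 1/2 by norm_num] at this
      exact this
    rw [deform hr0 hρ0 ?hd]
    case hd =>
      intro z hmin hmax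
      have hminpos : (0:ℝ) < min r ρ := lt_min hr0 hρ0
      have hmaxlt : max r ρ < 1/2 := max_lt hr_half (by linarith)
      apply diffAt1
      · intro h
        rw [sub_eq_zero] at h
        rw [← h, sub_self, map_zero] at hmin
        linarith
      · intro h
        rw [h] at hmax
        rw [show ((0:ℂ) - 1/2) = -(1/2:ℂ) by ring, map_neg_eq_map] at hmax
        rw [show ((1/2:ℂ)) = ((1/2:ℝ):ℂ) by norm_num, Complex.abs_ofReal] at hmax
        rw [show |(1/2:ℝ)| = 1/2 by norm_num] at hmax
        linarith
    -- ML bound on the circle of radius ρ around 1/2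
    have hb : ∀ z ∈ Metric.sphere (1/2:ℂ) ρ,
        Complex.abs (PhiF N x z * ((1/2:ℂ) - z) ^ n * (z + (α:ℂ)) / (2 * z)) ≤
          Real.exp (-(1/2 - ε/2) * x) * (A * (5/2)) := by
      intro z hz
      rw [mem_sphere_iff_norm, Complex.norm_eq_abs] at hz
      have hre : 1/2 - ρ ≤ z.re := by
        have h := Complex.abs_re_le_abs (z - 1/2)
        rw [hz] at h
        have : (z - 1/2).re = z.re - 1/2 := by simp
        rw [this] at h
        have := abs_le.mp h
        linarith [this.1]
      have hsub : Complex.abs ((1/2:ℂ) - z) = ρ := by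
        rw [Complex.abs.map_sub, hz]
      have hadd : Complex.abs ((1/2:ℂ) + z) ≤ 3/2 := by
        have e : (1/2:ℂ) + z = (z - 1/2) + 1 := by ring
        rw [e]
        calc Complex.abs ((z - 1/2) + 1) ≤ Complex.abs (z - 1/2) + Complex.abs 1 :=
              Complex.abs.add_le _ _
          _ = ρ + 1 := by rw [hz, map_one]
          _ ≤ 3/2 := by linarith
      have hzα : Complex.abs (z + (α:ℂ)) ≤ 5/4 := by
        have e : z + (α:ℂ) = (z - 1/2) + ((1/2 + α : ℝ):ℂ) := by push_cast; ring
        rw [e]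
        calc Complex.abs ((z - 1/2) + ((1/2 + α : ℝ):ℂ))
            ≤ Complex.abs (z - 1/2) + Complex.abs ((1/2 + α : ℝ):ℂ) := Complex.abs.add_le _ _
          _ = ρ + |1/2 + α| := by rw [hz, Complex.abs_ofReal]
          _ ≤ 5/4 := by
              have : |1/2 + α| ≤ 1 := abs_le.mpr ⟨by linarith, by linarith⟩
              linarith
      have h2z : 1/2 ≤ Complex.abs (2 * z) := by
        have e : ((1:ℝ):ℂ) = (2*z) - ((2:ℂ))*(z - 1/2) := by push_cast; ring
        have h := abs_sub_le' (2*z) ((2:ℂ)*(z - 1/2))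
        rw [← e] at h
        rw [Complex.abs_ofReal] at h
        have h2 : Complex.abs ((2:ℂ)*(z - 1/2)) = 2 * ρ := by
          rw [map_mul, hz, Complex.abs_two]
        rw [h2] at h
        have : |(1:ℝ)| = 1 := by norm_num
        rw [this] at h
        linarith
      have hPhi : Complex.abs (PhiF N x z) ≤ Real.exp (-(1/2 - ε/2) * x) * A := by
        rw [abs_PhiF]
        have he : Real.exp (-(x * z.re)) ≤ Real.exp (-(1/2 - ε/2) * x) := by
          apply Real.exp_le_exp.mpr
          nlinarith
        have hr : Complex.abs ((1/2:ℂ) + z) / Complex.abs ((1/2:ℂ) - z) ≤ 3/ε := by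
          rw [hsub, hρ_def]
          rw [div_le_div_iff₀ (by positivity) hε0]
          nlinarith
        calc Real.exp (-(x * z.re)) *
              (Complex.abs ((1/2:ℂ) + z) / Complex.abs ((1/2:ℂ) - z)) ^ (N - 1)
            ≤ Real.exp (-(1/2 - ε/2) * x) * (3/ε) ^ (N-1) := by
              gcongr <;> positivity
          _ = Real.exp (-(1/2 - ε/2) * x) * A := by rw [hA_def]
      rw [map_div₀, map_mul, map_mul, map_pow]
      have hρ1 : Complex.abs ((1/2:ℂ) - z) ^ n ≤ 1 := by
        rw [hsub]
        exact pow_le_one₀ hρ0.le (by linarith)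
      calc Complex.abs (PhiF N x z) * Complex.abs ((1/2:ℂ) - z) ^ n * Complex.abs (z + (α:ℂ)) /
            Complex.abs (2 * z)
          ≤ (Real.exp (-(1/2 - ε/2) * x) * A) * 1 * (5/4) / (1/2) := by
            gcongr <;> first | positivity | norm_num
          _ = Real.exp (-(1/2 - ε/2) * x) * (A * (5/2)) := by ring
    calc Complex.abs (cInt (1/2) ρ _) ≤ ρ * (Real.exp (-(1/2 - ε/2) * x) * (A * (5/2))) :=
          cInt_abs_le hρ0.le hb
      _ = (ρ * A * (5/2)) * Real.exp (-(1/2 - ε/2) * x) := by ring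
      _ ≤ (3*A + A*2^n + (1/ε)^(N-1)*(1/ε)^n) * Real.exp (-(1/2 - ε/2) * x) := by
          gcongr ?_ * _
          nlinarith [Real.exp_pos (-(1/2 - ε/2) * x)]
  · -- second bound
    rintro r₁ r₂ ⟨h10, h1a⟩ ⟨h20, h2a⟩ hdisj
    have hα1' : r₁ < |1/2 - α| := h1a α (by simp)
    have hα2' : r₁ < 1 := by
      have := h1a (-(1/2)) (by simp)
      rw [show |(1/2:ℝ) - -(1/2)| = 1 by norm_num] at this
      exact this
    have h2half : r₂ < |α - 1/2| := h2a (1/2) (by simp)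
    have h2neg : r₂ < |α + 1/2| := by
      have := h2a (-(1/2)) (by simp)
      rw [show |α - -(1/2)| = |α + 1/2| by ring_nf] at this
      exact this
    have hεle1 : ε ≤ |1/2 - α| := by
      rw [_root_.abs_of_nonneg (by linarith)]; linarith
    have hεle2 : ε ≤ |α + 1/2| := by
      rw [_root_.abs_of_nonneg (by linarith)]; linarith
    have hexp1 : (1:ℝ) ≤ Real.exp ((1/2 - ε) * x) := by
      have h0 : (0:ℝ) ≤ (1/2 - ε) * x := mul_nonneg (by linarith) hx
      linarith [Real.add_one_le_exp ((1/2 - ε) * x)]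
    -- evaluate the second integral via Cauchy's formula
    have heval : cInt (α : ℂ) r₂ (fun z => PhiF N x z * ((1/2:ℂ) + z)⁻¹ ^ n / (z - (α:ℂ)))
        = PhiF N x (α:ℂ) * ((1/2:ℂ) + (α:ℂ))⁻¹ ^ n := by
      have hdiff : ∀ z ∈ closedBall (α:ℂ) r₂,
          DifferentiableAt ℂ (fun z => PhiF N x z * ((1/2:ℂ) + z)⁻¹ ^ n) z := by
        intro z hz
        rw [mem_closedBall, Complex.dist_eq, Complex.norm_eq_abs] at hz
        apply diffAt2' N n x
        · intro h
          rw [sub_eq_zero] at h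
          rw [← h] at hz
          rw [show ((1/2:ℂ) - (α:ℂ)) = ((1/2 - α : ℝ):ℂ) by push_cast; ring,
            Complex.abs_ofReal] at hz
          rw [abs_sub_comm] at hz
          linarith [h2half, hz]
        · intro h
          have hzneg : z = -(1/2:ℂ) := by linear_combination h
          rw [hzneg] at hz
          rw [show (-(1/2:ℂ) - (α:ℂ)) = ((-(α + 1/2) : ℝ):ℂ) by push_cast; ring,
            Complex.abs_ofReal, abs_neg] at hz
          linarith
      have hrw : (fun z => PhiF N x z * ((1/2:ℂ) + z)⁻¹ ^ n / (z - (α:ℂ)))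
          = fun z => (z - (α:ℂ))⁻¹ • (PhiF N x z * ((1/2:ℂ) + z)⁻¹ ^ n) := by
        funext z
        rw [smul_eq_mul]
        ring
      rw [cInt, hrw, ← smul_eq_mul]
      exact Complex.two_pi_I_inv_smul_circleIntegral_sub_inv_smul_of_differentiable_on_off_countable
        (s := ∅) Set.countable_empty (by rw [mem_ball]; simpa using h20)
        (fun z hz => (hdiff z hz).continuousAt.continuousWithinAt)
        (fun z hz => hdiff z (ball_subset_closedBall hz.1))
    -- bound the value of the residue
    have hval : Complex.abs (PhiF N x (α:ℂ) * ((1/2:ℂ) + (α:ℂ))⁻¹ ^ n)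
        ≤ Real.exp ((1/2 - ε) * x) * ((1/ε)^(N-1) * (1/ε)^n) := by
      rw [map_mul, map_pow, map_inv₀, abs_PhiF]
      rw [show ((1/2:ℂ) + (α:ℂ)) = ((1/2 + α : ℝ):ℂ) by push_cast; ring,
        show ((1/2:ℂ) - (α:ℂ)) = ((1/2 - α : ℝ):ℂ) by push_cast; ring,
        Complex.abs_ofReal, Complex.abs_ofReal, Complex.ofReal_re]
      have hpos : (0:ℝ) < |1/2 + α| := by
        rw [_root_.abs_of_nonneg (by linarith)]; linarith
      have hneg : (0:ℝ) < |1/2 - α| := by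
        rw [_root_.abs_of_nonneg (by linarith)]; linarith
      have e1 : Real.exp (-(x * α)) ≤ Real.exp ((1/2 - ε) * x) := by
        apply Real.exp_le_exp.mpr
        nlinarith
      have e2 : |1/2 + α| / |1/2 - α| ≤ 1/ε := by
        rw [div_le_div_iff₀ hneg hε0]
        have h1 : |1/2 + α| ≤ 1 := abs_le.mpr ⟨by linarith, by linarith⟩
        have h2 : ε ≤ |1/2 - α| := by rw [_root_.abs_of_nonneg (by linarith)]; linarith
        nlinarith
      have e3 : |1/2 + α|⁻¹ ≤ 1/ε := by
        rw [show (1:ℝ)/ε = ε⁻¹ from one_div ε]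
        apply inv_anti₀ hε0
        rw [_root_.abs_of_nonneg (by linarith)]; linarith
      calc Real.exp (-(x * α)) * (|1/2 + α| / |1/2 - α|) ^ (N - 1) * (|1/2 + α|⁻¹) ^ n
          ≤ Real.exp ((1/2 - ε) * x) * (1/ε) ^ (N-1) * (1/ε) ^ n := by
            gcongr <;> positivity
        _ = Real.exp ((1/2 - ε) * x) * ((1/ε)^(N-1) * (1/ε)^n) := by ring
    -- bound the first integral via deformation and the ML inequality
    have hI1 : Complex.abs (cInt (1/2) r₁
        (fun z => PhiF N x z * ((1/2:ℂ) + z)⁻¹ ^ n / (z - (α:ℂ)))) ≤ A * 2^n := by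
      rw [deform h10 hρ0 ?hd2]
      case hd2 =>
        intro z hmin hmax
        have hminpos : (0:ℝ) < min r₁ ρ := lt_min h10 hρ0
        have hmaxlt1 : max r₁ ρ < |1/2 - α| := max_lt hα1' (by linarith)
        have hmaxlt2 : max r₁ ρ < 1 := max_lt hα2' (by linarith)
        apply diffAt2 N n x α
        · intro h
          rw [sub_eq_zero] at h
          rw [← h, sub_self, map_zero] at hmin
          linarith
        · intro h
          have hzneg : z = -(1/2:ℂ) := by linear_combination h
          rw [hzneg, show (-(1/2:ℂ) - 1/2) = ((-1 : ℝ):ℂ) by push_cast; ring,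
            Complex.abs_ofReal] at hmax
          rw [show |(-1:ℝ)| = 1 by norm_num] at hmax
          linarith
        · intro h
          rw [sub_eq_zero] at h
          rw [h, show ((α:ℂ) - 1/2) = ((α - 1/2 : ℝ):ℂ) by push_cast; ring,
            Complex.abs_ofReal, abs_sub_comm] at hmax
          linarith
      have hb2 : ∀ z ∈ Metric.sphere (1/2:ℂ) ρ,
          Complex.abs (PhiF N x z * ((1/2:ℂ) + z)⁻¹ ^ n / (z - (α:ℂ))) ≤
            A * 2^n / (ε/2) := by
        intro z hz
        rw [mem_sphere_iff_norm, Complex.norm_eq_abs] at hz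
        have hre : 1/2 - ρ ≤ z.re := by
          have h := Complex.abs_re_le_abs (z - 1/2)
          rw [hz] at h
          have e : (z - 1/2).re = z.re - 1/2 := by simp
          rw [e] at h
          have := abs_le.mp h
          linarith [this.1]
        have hsub : Complex.abs ((1/2:ℂ) - z) = ρ := by
          rw [Complex.abs.map_sub, hz]
        have hadd_ub : Complex.abs ((1/2:ℂ) + z) ≤ 3/2 := by
          have e : (1/2:ℂ) + z = (z - 1/2) + 1 := by ring
          rw [e]
          calc Complex.abs ((z - 1/2) + 1) ≤ Complex.abs (z - 1/2) + Complex.abs 1 :=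
                Complex.abs.add_le _ _
            _ = ρ + 1 := by rw [hz, map_one]
            _ ≤ 3/2 := by linarith
        have hadd_lb : 1 - ρ ≤ Complex.abs ((1/2:ℂ) + z) := by
          have e : ((1:ℝ):ℂ) = ((1/2:ℂ) + z) - (z - 1/2) := by push_cast; ring
          have h := abs_sub_le' ((1/2:ℂ) + z) (z - 1/2)
          rw [← e, Complex.abs_ofReal, hz] at h
          rw [show |(1:ℝ)| = 1 by norm_num] at h
          linarith
        have hzα_lb : ε/2 ≤ Complex.abs (z - (α:ℂ)) := by
          have e : ((1/2 - α : ℝ):ℂ) = (z - (α:ℂ)) - (z - 1/2) := by push_cast; ring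
          have h := abs_sub_le' (z - (α:ℂ)) (z - 1/2)
          rw [← e, Complex.abs_ofReal, hz] at h
          have : ε ≤ |1/2 - α| := hεle1
          rw [hρ_def] at h
          linarith
        have hPhi : Complex.abs (PhiF N x z) ≤ A := by
          rw [abs_PhiF]
          have he : Real.exp (-(x * z.re)) ≤ 1 := by
            apply Real.exp_le_one_iff.mpr
            nlinarith
          have hr : Complex.abs ((1/2:ℂ) + z) / Complex.abs ((1/2:ℂ) - z) ≤ 3/ε := by
            rw [hsub, hρ_def]
            rw [div_le_div_iff₀ (by positivity) hε0]
            nlinarith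
          calc Real.exp (-(x * z.re)) *
                (Complex.abs ((1/2:ℂ) + z) / Complex.abs ((1/2:ℂ) - z)) ^ (N - 1)
              ≤ 1 * (3/ε) ^ (N-1) := by gcongr <;> positivity
            _ = A := by rw [hA_def]; ring
        have hinv : (Complex.abs ((1/2:ℂ) + z))⁻¹ ^ n ≤ 2^n := by
          apply pow_le_pow_left₀ (by positivity)
          have h34 : (1/2:ℝ) ≤ Complex.abs ((1/2:ℂ) + z) := by linarith
          calc (Complex.abs ((1/2:ℂ) + z))⁻¹ ≤ (1/2:ℝ)⁻¹ :=
                inv_anti₀ (by norm_num) h34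
            _ = 2 := by norm_num
        rw [map_div₀, map_mul, map_pow, map_inv₀]
        gcongr <;> first
          | positivity
          | exact hPhi
          | exact hinv
      have hle := cInt_abs_le hρ0.le hb2
      have heq : ρ * (A * 2^n / (ε/2)) = A * 2^n := by
        rw [hρ_def, mul_comm]
        exact div_mul_cancel₀ _ (by positivity)
      rw [heq] at hle
      exact hle
    calc Complex.abs (cInt (1/2) r₁
            (fun z => PhiF N x z * ((1/2:ℂ) + z)⁻¹ ^ n / (z - (α:ℂ))) +
          cInt (α:ℂ) r₂
            (fun z => PhiF N x z * ((1/2:ℂ) + z)⁻¹ ^ n / (z - (α:ℂ)))) ≤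
          Complex.abs (cInt (1/2) r₁
            (fun z => PhiF N x z * ((1/2:ℂ) + z)⁻¹ ^ n / (z - (α:ℂ)))) +
          Complex.abs (cInt (α:ℂ) r₂
            (fun z => PhiF N x z * ((1/2:ℂ) + z)⁻¹ ^ n / (z - (α:ℂ)))) :=
          Complex.abs.add_le _ _
      _ ≤ A * 2^n + Real.exp ((1/2 - ε) * x) * ((1/ε)^(N-1) * (1/ε)^n) := by
          apply add_le_add hI1
          rw [heval]
          exact hval
      _ ≤ (3*A + A*2^n + (1/ε)^(N-1)*(1/ε)^n) * Real.exp ((1/2 - ε) * x) := by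
          nlinarith [hA, hB, hD, hexp1, mul_pos hA hB]
end

section
/- Fix α ∈ (−1/2,1/2) with α ≠ 0, and reals s ≤ y. Then, as β → −α with β ∈ (−1/2,1/2) and α + β > 0, the quantity e^{−(α+β)s+αy}/(α+β) + ∫_s^∞ sgn(y−u)·e^{−α|y−u| − βu} du (the integral being absolutely convergent for α+β>0) converges to e^{αs}·( sinh(α(y−s))/α + (y−s)·e^{α(y−s)} ). -/
open Filter Topology MeasureTheory Set Real

/-- integral of `exp (-b*x)` over `Ioi a` for `b > 0`. -/
lemma aux_int_exp_neg_Ioi (a : ℝ) {b : ℝ} (hb : 0 < b) :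
    ∫ x in Set.Ioi a, Real.exp (-b * x) = Real.exp (-b * a) / b := by
  have hderiv : ∀ x ∈ Set.Ici a, HasDerivAt (fun x => -Real.exp (-b * x) / b)
      (Real.exp (-b * x)) x := by
    intro x _
    have h1 : HasDerivAt (fun x : ℝ => -b * x) (-b) x := by
      simpa using (hasDerivAt_id x).const_mul (-b)
    have h2 := h1.exp
    have h3 := (h2.neg).div_const b
    refine h3.congr_deriv ?_
    field_simp
  have htend : Tendsto (fun x => -Real.exp (-b * x) / b) atTop (𝓝 0) := by
    have : Tendsto (fun x : ℝ => -b * x) atTop atBot :=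
      Tendsto.const_mul_atTop_of_neg (neg_neg_iff_pos.mpr hb) tendsto_id
    have := (Real.tendsto_exp_atBot.comp this).neg.div_const b
    simpa using this
  have := MeasureTheory.integral_Ioi_of_hasDerivAt_of_tendsto'
    hderiv ((exp_neg_integrableOn_Ioi a hb)) htend
  rw [this]
  field_simp
  ring

/-- interval integral of `exp (c*x)` for `c ≠ 0`. -/
lemma aux_int_exp_mul (a b : ℝ) {c : ℝ} (hc : c ≠ 0) :
    ∫ x in a..b, Real.exp (c * x) = (Real.exp (c * b) - Real.exp (c * a)) / c := by
  have hderiv : ∀ x ∈ Set.uIcc a b, HasDerivAt (fun x => Real.exp (c * x) / c)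
      (Real.exp (c * x)) x := by
    intro x _
    have h1 : HasDerivAt (fun x : ℝ => c * x) c x := by
      simpa using (hasDerivAt_id x).const_mul c
    have := (h1.exp).div_const c
    refine this.congr_deriv ?_
    field_simp
  have hcont : IntervalIntegrable (fun x => Real.exp (c * x)) volume a b :=
    (Real.continuous_exp.comp (continuous_const.mul continuous_id)).intervalIntegrable a b
  rw [intervalIntegral.integral_eq_sub_of_hasDerivAt hderiv hcont]
  ring

/-- For α ∈ (−1/2,1/2), α ≠ 0 and s ≤ y, as β → −α with β ∈ (−1/2,1/2)
and α + β > 0, the quantity e^{−(α+β)s+αy}/(α+β) + ∫_s^∞ sgn(y−u)·e^{−α|y−u|−βu} du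
converges to e^{αs}·(sinh(α(y−s))/α + (y−s)·e^{α(y−s)}). -/
theorem stmt11 (α : ℝ) (hα : α ∈ Set.Ioo (-(1 / 2) : ℝ) (1 / 2)) (hα0 : α ≠ 0)
    (s y : ℝ) (hsy : s ≤ y) :
    Tendsto
      (fun β : ℝ =>
        Real.exp (-(α + β) * s + α * y) / (α + β) +
          ∫ u in Set.Ioi s, Real.sign (y - u) * Real.exp (-α * |y - u| - β * u))
      (𝓝[{β : ℝ | β ∈ Set.Ioo (-(1 / 2) : ℝ) (1 / 2) ∧ 0 < α + β}] (-α))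
      (𝓝 (Real.exp (α * s) *
        (Real.sinh (α * (y - s)) / α + (y - s) * Real.exp (α * (y - s))))) := by
  set S : Set ℝ := {β : ℝ | β ∈ Set.Ioo (-(1 / 2) : ℝ) (1 / 2) ∧ 0 < α + β} with hS
  set G : ℝ → ℝ := fun β =>
    Real.exp (α * y) * ((Real.exp (-(α + β) * s) - Real.exp (-(α + β) * y)) / (α + β)) +
      Real.exp (-α * y) * ((Real.exp ((α - β) * y) - Real.exp ((α - β) * s)) / (α - β)) with hG
  -- Step 1: eventual equality with G
  have hkey : ∀ β : ℝ, 0 < α + β → β ≠ α →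
      Real.exp (-(α + β) * s + α * y) / (α + β) +
        (∫ u in Set.Ioi s, Real.sign (y - u) * Real.exp (-α * |y - u| - β * u)) = G β := by
    intro β hb hba
    have hc : α - β ≠ 0 := sub_ne_zero.mpr (Ne.symm hba)
    set f : ℝ → ℝ := fun u => Real.sign (y - u) * Real.exp (-α * |y - u| - β * u) with hf
    have hIoi : Set.EqOn f (fun u => -(Real.exp (α * y) * Real.exp (-(α + β) * u)))
        (Set.Ioi y) := by
      intro u hu
      have hu' : y - u < 0 := by simp only [Set.mem_Ioi] at hu; linarith
      simp only [hf, Real.sign_of_neg hu', abs_of_neg hu', ← Real.exp_add]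
      rw [neg_one_mul, neg_inj]
      congr 1
      ring
    have hIoo : Set.EqOn f (fun u => Real.exp (-α * y) * Real.exp ((α - β) * u))
        (Set.Ioo s y) := by
      intro u hu
      have hu' : 0 < y - u := by simp only [Set.mem_Ioo] at hu; linarith
      simp only [hf, Real.sign_of_pos hu', abs_of_pos hu', ← Real.exp_add, one_mul]
      congr 1
      ring
    have int2 : IntegrableOn f (Set.Ioi y) := by
      rw [integrableOn_congr_fun hIoi measurableSet_Ioi]
      exact ((exp_neg_integrableOn_Ioi y hb).const_mul (Real.exp (α * y))).neg
    have int1 : IntegrableOn f (Set.Ioc s y) := by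
      rw [integrableOn_Ioc_iff_integrableOn_Ioo,
        integrableOn_congr_fun hIoo measurableSet_Ioo]
      exact ((continuous_const.mul (Real.continuous_exp.comp
        (continuous_const.mul continuous_id))).integrableOn_Icc).mono_set
        Set.Ioo_subset_Icc_self
    have hsplit : (∫ u in Set.Ioi s, f u) =
        (∫ u in Set.Ioc s y, f u) + ∫ u in Set.Ioi y, f u := by
      rw [← Set.Ioc_union_Ioi_eq_Ioi hsy,
        setIntegral_union (Set.Ioc_disjoint_Ioi le_rfl) measurableSet_Ioi int1 int2]
    have hI1 : (∫ u in Set.Ioc s y, f u) =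
        Real.exp (-α * y) * ((Real.exp ((α - β) * y) - Real.exp ((α - β) * s)) / (α - β)) := by
      rw [integral_Ioc_eq_integral_Ioo, setIntegral_congr_fun measurableSet_Ioo hIoo,
        ← integral_Ioc_eq_integral_Ioo, ← intervalIntegral.integral_of_le hsy,
        intervalIntegral.integral_const_mul, aux_int_exp_mul s y hc]
    have hI2 : (∫ u in Set.Ioi y, f u) =
        -(Real.exp (α * y) * (Real.exp (-(α + β) * y) / (α + β))) := by
      rw [setIntegral_congr_fun measurableSet_Ioi hIoi, integral_neg, MeasureTheory.integral_const_mul,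
        aux_int_exp_neg_Ioi y hb]
    rw [hsplit, hI1, hI2, hG]
    have he : Real.exp (-(α + β) * s + α * y) = Real.exp (α * y) * Real.exp (-(α + β) * s) := by
      rw [← Real.exp_add]; ring_nf
    rw [he]
    field_simp
    ring
  -- eventual equality as filters
  have hne : (-α : ℝ) ≠ α := by
    intro h; exact hα0 (by linarith [h])
  have hev : ∀ᶠ β in 𝓝[S] (-α),
      Real.exp (-(α + β) * s + α * y) / (α + β) +
        (∫ u in Set.Ioi s, Real.sign (y - u) * Real.exp (-α * |y - u| - β * u)) = G β := by
    filter_upwards [self_mem_nhdsWithin,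
      eventually_nhdsWithin_of_eventually_nhds (eventually_ne_nhds hne)] with β hβS hβne
    exact hkey β hβS.2 hβne
  -- Step 2: the limit of G
  have hT1 : Tendsto (fun β : ℝ =>
      Real.exp (α * y) * ((Real.exp (-(α + β) * s) - Real.exp (-(α + β) * y)) / (α + β)))
      (𝓝[S] (-α)) (𝓝 (Real.exp (α * y) * (y - s))) := by
    have hmap : Tendsto (fun β : ℝ => α + β) (𝓝[S] (-α)) (𝓝[≠] (0 : ℝ)) := by
      rw [tendsto_nhdsWithin_iff]
      constructor
      · have : Tendsto (fun β : ℝ => α + β) (𝓝 (-α)) (𝓝 (α + -α)) :=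
          (continuous_const.add continuous_id).tendsto (-α)
        simpa using this.mono_left nhdsWithin_le_nhds
      · filter_upwards [self_mem_nhdsWithin] with β hβ
        exact ne_of_gt hβ.2
    have h1 : HasDerivAt (fun t : ℝ => Real.exp (-t * s)) (-s) 0 := by
      have ha : HasDerivAt (fun t : ℝ => -t * s) (-s) 0 := by
        simpa using ((hasDerivAt_id (0 : ℝ)).neg.mul_const s)
      simpa using ha.exp
    have h2 : HasDerivAt (fun t : ℝ => Real.exp (-t * y)) (-y) 0 := by
      have ha : HasDerivAt (fun t : ℝ => -t * y) (-y) 0 := by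
        simpa using ((hasDerivAt_id (0 : ℝ)).neg.mul_const y)
      simpa using ha.exp
    have hD : HasDerivAt
        (fun t : ℝ => Real.exp (α * y) * (Real.exp (-t * s) - Real.exp (-t * y)))
        (Real.exp (α * y) * (y - s)) 0 := by
      have := (h1.sub h2).const_mul (Real.exp (α * y))
      refine this.congr_deriv ?_
      ring
    have hslope := hasDerivAt_iff_tendsto_slope.mp hD
    have hφ : Tendsto (fun t : ℝ =>
        Real.exp (α * y) * ((Real.exp (-t * s) - Real.exp (-t * y)) / t))
        (𝓝[≠] (0 : ℝ)) (𝓝 (Real.exp (α * y) * (y - s))) := by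
      apply hslope.congr'
      filter_upwards [self_mem_nhdsWithin] with t ht
      rw [slope_def_field]
      simp only [neg_zero, zero_mul, Real.exp_zero, sub_self, mul_zero, sub_zero]
      field_simp
    exact hφ.comp hmap
  have hT2 : Tendsto (fun β : ℝ =>
      Real.exp (-α * y) * ((Real.exp ((α - β) * y) - Real.exp ((α - β) * s)) / (α - β)))
      (𝓝[S] (-α))
      (𝓝 (Real.exp (-α * y) *
        ((Real.exp (2 * α * y) - Real.exp (2 * α * s)) / (2 * α)))) := by
    have hc1 : Tendsto (fun β : ℝ => α - β) (𝓝 (-α)) (𝓝 (2 * α)) := by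
      have : Tendsto (fun β : ℝ => α - β) (𝓝 (-α)) (𝓝 (α - -α)) :=
        (continuous_const.sub continuous_id).tendsto (-α)
      convert this using 2
      ring
    have h2α : (2 : ℝ) * α ≠ 0 := by
      simp [hα0]
    have hA : Tendsto (fun β : ℝ => Real.exp ((α - β) * y)) (𝓝 (-α))
        (𝓝 (Real.exp (2 * α * y))) := (Real.continuous_exp.tendsto _).comp (hc1.mul_const y)
    have hB : Tendsto (fun β : ℝ => Real.exp ((α - β) * s)) (𝓝 (-α))
        (𝓝 (Real.exp (2 * α * s))) := (Real.continuous_exp.tendsto _).comp (hc1.mul_const s)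
    have hdiv : Tendsto (fun β : ℝ =>
        (Real.exp ((α - β) * y) - Real.exp ((α - β) * s)) / (α - β)) (𝓝 (-α))
        (𝓝 ((Real.exp (2 * α * y) - Real.exp (2 * α * s)) / (2 * α))) :=
      (hA.sub hB).div hc1 h2α
    exact ((tendsto_const_nhds.mul hdiv).mono_left nhdsWithin_le_nhds)
  have hGlim : Tendsto G (𝓝[S] (-α))
      (𝓝 (Real.exp (α * y) * (y - s) + Real.exp (-α * y) *
        ((Real.exp (2 * α * y) - Real.exp (2 * α * s)) / (2 * α)))) := hT1.add hT2
  -- Step 3: identify the limit value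
  have hval : Real.exp (α * y) * (y - s) + Real.exp (-α * y) *
      ((Real.exp (2 * α * y) - Real.exp (2 * α * s)) / (2 * α)) =
      Real.exp (α * s) *
        (Real.sinh (α * (y - s)) / α + (y - s) * Real.exp (α * (y - s))) := by
    rw [Real.sinh_eq]
    have e1 : Real.exp (α * (y - s)) = Real.exp (α * y) / Real.exp (α * s) := by
      rw [← Real.exp_sub]; ring_nf
    have e2 : Real.exp (-(α * (y - s))) = Real.exp (α * s) / Real.exp (α * y) := by
      rw [← Real.exp_sub]; ring_nf
    have e3 : Real.exp (-α * y) = 1 / Real.exp (α * y) := by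
      rw [one_div, ← Real.exp_neg]; ring_nf
    have e4 : Real.exp (2 * α * y) = Real.exp (α * y) * Real.exp (α * y) := by
      rw [← Real.exp_add]; ring_nf
    have e5 : Real.exp (2 * α * s) = Real.exp (α * s) * Real.exp (α * s) := by
      rw [← Real.exp_add]; ring_nf
    rw [e1, e2, e3, e4, e5]
    have hy := Real.exp_ne_zero (α * y)
    have hs' := Real.exp_ne_zero (α * s)
    field_simp
    ring
  rw [← hval]
  exact hGlim.congr' (hev.mono fun β h => h.symm)
end

section
/- Fix δ ∈ ℝ, u > 0 and X ∈ ℝ. For each integer N ≥ 1 set α_N = δ·2^{−4/3}·N^{−1/3}, n_N = ⌈u·2^{5/3}·N^{2/3}⌉, and x_N = 4N − 2u·2^{5/3}·N^{2/3} + X·2^{4/3}·N^{1/3}. Then (for N large enough that |α_N| < 1/2) the limit as N → ∞ of 2^{n_N}·e^{x_N·α_N}·((1/2−α_N)/(1/2+α_N))^{N−1}·(1/2+α_N)^{n_N} exists and equals e^{−δ³/3 − δ²u + δX}. -/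
open Filter Topology

private lemma logb2 {s : ℝ} (hs : |s| ≤ 1/2) :
    |Real.log (1 + s) - s + s^2/2| ≤ 2 * |s|^3 := by
  have h1 : |(-s)| < 1 := by rw [abs_neg]; linarith
  have A := Real.abs_log_sub_add_sum_range_le h1 2
  simp [Finset.sum_range_succ] at A
  have e : Real.log (1 + s) - s + s^2/2 = -s + s ^ 2 / (1+1) + Real.log (1 + s) := by ring
  rw [e]
  refine A.trans ?_
  rw [div_le_iff₀ (by linarith [abs_nonneg s])]
  nlinarith [abs_nonneg s, pow_nonneg (abs_nonneg s) 3]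

private lemma logb1 {s : ℝ} (hs : |s| ≤ 1/2) :
    |Real.log (1 - s) - Real.log (1 + s) + 2*s + (2/3)*s^3| ≤ 4 * |s|^4 := by
  have h1 : |s| < 1 := by linarith
  have h1' : |(-s)| < 1 := by rw [abs_neg]; linarith
  have A := Real.abs_log_sub_add_sum_range_le h1 3
  have B := Real.abs_log_sub_add_sum_range_le h1' 3
  simp [Finset.sum_range_succ] at A B
  have e : Real.log (1 - s) - Real.log (1 + s) + 2*s + (2/3)*s^3 =
      (s + s ^ 2 / (1+1) + s^3/(2+1) + Real.log (1 - s))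
      - (-s + s ^ 2 / (1+1) + (-s)^3/(2+1) + Real.log (1 + s)) := by ring
  rw [e]
  refine (abs_sub _ _).trans ?_
  have h2 : |s|^4 / (1 - |s|) ≤ 2 * |s|^4 := by
    rw [div_le_iff₀ (by linarith [abs_nonneg s])]
    nlinarith [abs_nonneg s, pow_nonneg (abs_nonneg s) 4]
  linarith [A.trans h2, B.trans h2]

/-- Under the critical scaling α_N = δ2^{-4/3}N^{-1/3},
n_N = ⌈u·2^{5/3}·N^{2/3}⌉, x_N = 4N − 2u·2^{5/3}·N^{2/3} + X·2^{4/3}·N^{1/3}, the rescaled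
function 2^{n_N}·e^{x_N α_N}·((1/2−α_N)/(1/2+α_N))^{N−1}·(1/2+α_N)^{n_N} converges, as
N → ∞, to e^{−δ³/3 − δ²u + δX}. -/
theorem stmt12 (δ u X : ℝ) (hu : 0 < u) :
    Tendsto
      (fun N : ℕ =>
        let α : ℝ := δ * (2 : ℝ) ^ (-(4 : ℝ) / 3) * (N : ℝ) ^ (-(1 : ℝ) / 3)
        let n : ℕ := ⌈u * (2 : ℝ) ^ ((5 : ℝ) / 3) * (N : ℝ) ^ ((2 : ℝ) / 3)⌉₊
        let x : ℝ := 4 * N - 2 * u * (2 : ℝ) ^ ((5 : ℝ) / 3) * (N : ℝ) ^ ((2 : ℝ) / 3) +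
          X * (2 : ℝ) ^ ((4 : ℝ) / 3) * (N : ℝ) ^ ((1 : ℝ) / 3)
        (2 : ℝ) ^ n * Real.exp (x * α) * ((1 / 2 - α) / (1 / 2 + α)) ^ (N - 1) *
          (1 / 2 + α) ^ n)
      atTop
      (𝓝 (Real.exp (-δ ^ 3 / 3 - δ ^ 2 * u + δ * X))) := by
  -- notation
  have hppos : (0:ℝ) < (2:ℝ)^(-(4:ℝ)/3) := Real.rpow_pos_of_pos two_pos _
  set p : ℝ := (2:ℝ)^(-(4:ℝ)/3) with hpdef
  set aa : ℕ → ℝ := fun N => (N:ℝ)^(-(1:ℝ)/3) with haadef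
  set t : ℕ → ℝ := fun N => 2 * (δ * p * aa N) with htdef
  set mm : ℕ → ℝ := fun N => u * (2:ℝ)^((5:ℝ)/3) * (N:ℝ)^((2:ℝ)/3) with hmmdef
  set E1 : ℕ → ℝ := fun N => ((N-1 : ℕ):ℝ) *
    (Real.log (1 - t N) - Real.log (1 + t N) + 2*(t N) + (2/3)*(t N)^3) with hE1def
  set E2 : ℕ → ℝ := fun N => ((⌈mm N⌉₊ : ℝ) - mm N) * Real.log (1 + t N) with hE2def
  set E3 : ℕ → ℝ := fun N => mm N * (Real.log (1 + t N) - t N + (t N)^2/2) with hE3def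
  set E4 : ℕ → ℝ := fun N => 2*(t N) + (2/3)*(t N)^3 with hE4def
  set c0 : ℝ := -δ ^ 3 / 3 - δ ^ 2 * u + δ * X with hc0def
  -- basic limits
  have ha : Tendsto aa atTop (𝓝 0) := by
    have := (tendsto_rpow_neg_atTop (by norm_num : (0:ℝ) < 1/3)).comp
      (tendsto_natCast_atTop_atTop (R := ℝ))
    simpa [haadef, neg_div, Function.comp_def] using this
  have hT : Tendsto t atTop (𝓝 0) := by
    have := ha.const_mul (2 * (δ * p))
    simpa [htdef, mul_assoc] using this
  have hL2 : Tendsto (fun N => Real.log (1 + t N)) atTop (𝓝 0) := by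
    have h1 : Tendsto (fun N => 1 + t N) atTop (𝓝 1) := by
      simpa using tendsto_const_nhds.add hT
    have := ((Real.continuousAt_log one_ne_zero).tendsto).comp h1
    simpa [Function.comp_def] using this
  -- eventual smallness of t
  have hsmall : ∀ᶠ N : ℕ in atTop, |t N| ≤ 1/2 := by
    have : Tendsto (fun N => |t N|) atTop (𝓝 0) := by simpa using hT.abs
    filter_upwards [this.eventually_lt_const (by norm_num : (0:ℝ) < 1/2)] with N h
    exact h.le
  -- per-N algebraic facts
  have hq1 : (2:ℝ)^((4:ℝ)/3) * p = 1 := by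
    rw [hpdef, ← Real.rpow_add two_pos]; norm_num
  have hq2 : (2:ℝ)^((5:ℝ)/3) * p^2 = 1/2 := by
    rw [hpdef, ← Real.rpow_natCast ((2:ℝ)^(-(4:ℝ)/3)) 2,
      ← Real.rpow_mul (by norm_num : (0:ℝ) ≤ 2), ← Real.rpow_add two_pos]
    norm_num
  have hq3 : p^3 = 1/16 := by
    rw [hpdef, ← Real.rpow_natCast ((2:ℝ)^(-(4:ℝ)/3)) 3,
      ← Real.rpow_mul (by norm_num : (0:ℝ) ≤ 2)]
    norm_num
  have key : ∀ N : ℕ, 1 ≤ N →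
      ((N:ℝ)^((1:ℝ)/3) * aa N = 1 ∧ (N:ℝ)^((2:ℝ)/3) * (aa N)^2 = 1 ∧
        (N:ℝ) * (aa N)^3 = 1) := by
    intro N hN
    have hNpos : (0:ℝ) < N := by exact_mod_cast hN
    refine ⟨?_, ?_, ?_⟩
    · rw [haadef]; simp only []
      rw [← Real.rpow_add hNpos]; norm_num
    · rw [haadef]; simp only []
      rw [← Real.rpow_natCast ((N:ℝ)^(-(1:ℝ)/3)) 2, ← Real.rpow_mul hNpos.le,
        ← Real.rpow_add hNpos]
      norm_num
    · rw [haadef]; simp only []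
      rw [← Real.rpow_natCast ((N:ℝ)^(-(1:ℝ)/3)) 3, ← Real.rpow_mul hNpos.le]
      nth_rewrite 1 [← Real.rpow_one (N:ℝ)]
      rw [← Real.rpow_add hNpos]; norm_num
  have habs : ∀ N : ℕ, |t N| = 2 * |δ| * p * aa N := by
    intro N
    have haN : 0 ≤ aa N := Real.rpow_nonneg (Nat.cast_nonneg N) _
    rw [htdef]; simp only []
    rw [abs_mul, abs_mul, abs_mul, abs_two, abs_of_pos hppos, abs_of_nonneg haN]
    ring
  -- limits of error terms
  have hE1lim : Tendsto E1 atTop (𝓝 0) := by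
    apply squeeze_zero_norm' (a := fun N => (4 * (2 * |δ| * p)^4) * aa N)
    · filter_upwards [hsmall, eventually_ge_atTop 1] with N hs hN
      obtain ⟨hba, hca, hNa⟩ := key N hN
      have haN : 0 ≤ aa N := Real.rpow_nonneg (Nat.cast_nonneg N) _
      have hcast : ((N-1:ℕ):ℝ) ≤ (N:ℝ) := by exact_mod_cast Nat.sub_le N 1
      have hcast0 : (0:ℝ) ≤ ((N-1:ℕ):ℝ) := Nat.cast_nonneg _
      have hb := logb1 hs
      rw [hE1def]; simp only []
      rw [Real.norm_eq_abs, abs_mul, abs_of_nonneg hcast0]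
      calc ((N-1:ℕ):ℝ) * |Real.log (1 - t N) - Real.log (1 + t N) + 2*(t N) + (2/3)*(t N)^3|
          ≤ (N:ℝ) * (4 * |t N|^4) := by
            apply mul_le_mul hcast hb (abs_nonneg _) (Nat.cast_nonneg N)
        _ = (4 * (2 * |δ| * p)^4) * aa N := by
            rw [habs N]
            linear_combination (4*(2 * |δ| * p)^4 * aa N) * hNa
    · simpa using ha.const_mul (4 * (2 * |δ| * p)^4)
  have hE2lim : Tendsto E2 atTop (𝓝 0) := by
    apply squeeze_zero_norm' (a := fun N => |Real.log (1 + t N)|)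
    · filter_upwards with N
      have h1 : mm N ≤ (⌈mm N⌉₊ : ℝ) := Nat.le_ceil _
      have hm0 : 0 ≤ mm N := by
        rw [hmmdef]; simp only []
        positivity
      have h2 : (⌈mm N⌉₊ : ℝ) < mm N + 1 := Nat.ceil_lt_add_one hm0
      rw [hE2def]; simp only []
      rw [Real.norm_eq_abs, abs_mul]
      have : |(⌈mm N⌉₊ : ℝ) - mm N| ≤ 1 := by rw [abs_le]; constructor <;> linarith
      calc |(⌈mm N⌉₊ : ℝ) - mm N| * |Real.log (1 + t N)|
          ≤ 1 * |Real.log (1 + t N)| := by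
            apply mul_le_mul_of_nonneg_right this (abs_nonneg _)
        _ = |Real.log (1 + t N)| := one_mul _
    · simpa using hL2.abs
  have hE3lim : Tendsto E3 atTop (𝓝 0) := by
    apply squeeze_zero_norm' (a := fun N => (2 * u * (2:ℝ)^((5:ℝ)/3) * (2 * |δ| * p)^3) * aa N)
    · filter_upwards [hsmall, eventually_ge_atTop 1] with N hs hN
      obtain ⟨hba, hca, hNa⟩ := key N hN
      have hm0 : 0 ≤ mm N := by
        rw [hmmdef]; simp only []
        positivity
      have hb := logb2 hs
      rw [hE3def]; simp only []
      rw [Real.norm_eq_abs, abs_mul, abs_of_nonneg hm0]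
      calc mm N * |Real.log (1 + t N) - t N + (t N)^2/2|
          ≤ mm N * (2 * |t N|^3) := mul_le_mul_of_nonneg_left hb hm0
        _ = (2 * u * (2:ℝ)^((5:ℝ)/3) * (2 * |δ| * p)^3) * aa N := by
            rw [habs N, hmmdef]
            linear_combination (2 * u * (2:ℝ)^((5:ℝ)/3) * (2 * |δ| * p)^3 * aa N) * hca
    · simpa using ha.const_mul (2 * u * (2:ℝ)^((5:ℝ)/3) * (2 * |δ| * p)^3)
  have hE4lim : Tendsto E4 atTop (𝓝 0) := by
    have := (hT.const_mul (2:ℝ)).add ((hT.pow 3).const_mul (2/3 : ℝ))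
    simpa [hE4def] using this
  have hsum : Tendsto (fun N => c0 + (E1 N + E2 N + E3 N + E4 N)) atTop (𝓝 c0) := by
    have := tendsto_const_nhds (x := c0) (f := atTop (α := ℕ))
    have h := this.add (((hE1lim.add hE2lim).add hE3lim).add hE4lim)
    simpa [add_assoc] using h
  have hmain : Tendsto (fun N => Real.exp (c0 + (E1 N + E2 N + E3 N + E4 N))) atTop
      (𝓝 (Real.exp c0)) := (Real.continuous_exp.tendsto c0).comp hsum
  refine Tendsto.congr' ?_ hmain
  filter_upwards [hsmall, eventually_ge_atTop 1] with N hs hN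
  obtain ⟨hba, hca, hNa⟩ := key N hN
  simp only []
  set α : ℝ := δ * p * (N:ℝ)^(-(1:ℝ)/3) with hα
  set n' : ℕ := ⌈u * (2:ℝ)^((5:ℝ)/3) * (N:ℝ)^((2:ℝ)/3)⌉₊ with hn'
  set xE : ℝ := 4*(N:ℝ) - 2*u*(2:ℝ)^((5:ℝ)/3)*(N:ℝ)^((2:ℝ)/3)
      + X*(2:ℝ)^((4:ℝ)/3)*(N:ℝ)^((1:ℝ)/3) with hxE
  have hst : t N = 2 * α := by
    rw [htdef]
  have hmmN : mm N = u * (2:ℝ)^((5:ℝ)/3) * (N:ℝ)^((2:ℝ)/3) := by rw [hmmdef]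
  have habs' := abs_le.mp hs
  rw [hst] at habs'
  have h1 : (0:ℝ) < 1 + t N := by rw [hst]; linarith [habs'.1]
  have h2 : (0:ℝ) < 1 - t N := by rw [hst]; linarith [habs'.2]
  have hd1 : (1/2 - α)/(1/2 + α) = (1 - t N)/(1 + t N) := by
    rw [hst, div_eq_div_iff (by linarith [habs'.1]) (by linarith [habs'.1])]; ring
  have hd2 : ((1/2 - α)/(1/2 + α))^(N-1)
      = Real.exp (((N-1:ℕ):ℝ) * (Real.log (1 - t N) - Real.log (1 + t N))) := by
    rw [hd1, ← Real.log_div h2.ne' h1.ne', ← Real.log_pow,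
      Real.exp_log (pow_pos (div_pos h2 h1) _)]
  have hd3 : (2:ℝ)^n' * (1/2 + α)^n' = Real.exp ((n':ℝ) * Real.log (1 + t N)) := by
    rw [← mul_pow, show (2:ℝ)*(1/2+α) = 1 + t N by rw [hst]; ring, ← Real.log_pow,
      Real.exp_log (pow_pos h1 _)]
  calc Real.exp (c0 + (E1 N + E2 N + E3 N + E4 N))
      = Real.exp (xE * α + ((N-1:ℕ):ℝ) * (Real.log (1 - t N) - Real.log (1 + t N))
          + (n':ℝ) * Real.log (1 + t N)) := by
        rw [Real.exp_eq_exp]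
        rw [hE1def, hE2def, hE3def, hE4def]
        simp only []
        rw [hc0def, hst, hmmN, ← hn', hxE, hα, Nat.cast_sub hN, Nat.cast_one]
        have hba' := hba; have hca' := hca; have hNa' := hNa
        simp only [haadef] at hba' hca' hNa'
        linear_combination (-(δ*X*(2:ℝ)^((4:ℝ)/3)*p)) * hba' + (-(δ*X)) * hq1
          + ((16/3)*δ^3*p^3) * hNa' + ((16/3)*δ^3) * hq3
          + (2*u*δ^2*(2:ℝ)^((5:ℝ)/3)*p^2) * hca' + (2*u*δ^2) * hq2
    _ = ((2:ℝ)^n' * (1/2 + α)^n') * Real.exp (xE * α)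
          * (((1/2 - α)/(1/2 + α))^(N-1)) := by
        rw [hd2, hd3, ← Real.exp_add, ← Real.exp_add]; ring_nf
    _ = (2:ℝ)^n' * Real.exp (xE * α) * ((1/2 - α)/(1/2 + α))^(N-1) * (1/2 + α)^n' := by
        ring
end
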